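/- arXiv:1510.01540 — 8 statements merged into one kernel-verified Lean document; each statement's English description precedes it below -/
import Mathlib

section
/- Fix real constants ε_1, …, ε_n and let F^k denote the Lauricella coefficient polynomials. Then for every k ≥ 0 and all i ≠ j, the polynomial identity (x_i − x_j) · ∂²F^k/∂x_i∂x_j = ε_j · ∂F^k/∂x_i − ε_i · ∂F^k/∂x_j holds in the polynomial ring ℝ[x_1, …, x_n]; that is, each F^k is a polynomial solution of the Euler–Poisson–Darboux system. -/
open MvPolynomial

/-- The Lauricella coefficient polynomials
`F^k(x) = Σ_{i₁+⋯+iₙ=k} ∏_j ((ε_j)_{i_j}/i_j!) x_j^{i_j}`,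
the coefficients of `z^k` in `∏_j (1 - x_j z)^{-ε_j}`;
`(ε)_i` is the (ascending) Pochhammer symbol. -/
noncomputable def lauricellaF (n : ℕ) (ε : Fin n → ℝ) (k : ℕ) :
    MvPolynomial (Fin n) ℝ :=
  ∑ d ∈ Finset.Nat.antidiagonalTuple n k,
    C (∏ j, (ascPochhammer ℝ (d j)).eval (ε j) / (Nat.factorial (d j) : ℝ)) *
      ∏ j, (X j : MvPolynomial (Fin n) ℝ) ^ (d j)

namespace EPDaux

variable {n : ℕ}

/-- The indicator tuple of `i`. -/
def esgl (i : Fin n) : Fin n → ℕ := Pi.single i 1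

lemma esgl_apply (i j : Fin n) : esgl i j = if j = i then 1 else 0 := by
  simp [esgl, Pi.single_apply]

/-- View a tuple as a finitely supported function. -/
noncomputable def sfun (d : Fin n → ℕ) : Fin n →₀ ℕ := Finsupp.equivFunOnFinite.symm d

@[simp] lemma sfun_apply (d : Fin n → ℕ) (j : Fin n) : sfun d j = d j := rfl

@[simp] lemma sfun_zero : sfun (0 : Fin n → ℕ) = 0 := by
  ext j'; rfl

/-- The Lauricella coefficient of a multi-index. -/
noncomputable def lc (ε : Fin n → ℝ) (d : Fin n → ℕ) : ℝ :=
  ∏ j, (ascPochhammer ℝ (d j)).eval (ε j) / (Nat.factorial (d j) : ℝ)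

lemma monomial_sfun (d : Fin n → ℕ) (a : ℝ) :
    (monomial (sfun d) a : MvPolynomial (Fin n) ℝ) = C a * ∏ j, (X j) ^ (d j) := by
  rw [monomial_eq]
  congr 1
  exact Finsupp.prod_fintype _ _ (fun i => pow_zero _)

lemma lauricellaF_eq (ε : Fin n → ℝ) (k : ℕ) :
    lauricellaF n ε k
      = ∑ d ∈ Finset.Nat.antidiagonalTuple n k, monomial (sfun d) (lc ε d) := by
  unfold lauricellaF lc
  refine Finset.sum_congr rfl fun d _ => (monomial_sfun d _).symm

lemma apply_add_esgl_self (m : Fin n → ℕ) (i : Fin n) :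
    (m + esgl i) i = m i + 1 := by simp [esgl_apply]

lemma apply_add_esgl_ne (m : Fin n → ℕ) (i j : Fin n) (h : j ≠ i) :
    (m + esgl i) j = m j := by simp [esgl_apply, h]

lemma sub_add_esgl {d : Fin n → ℕ} {i : Fin n} (hd : d i ≠ 0) :
    d - esgl i + esgl i = d := by
  funext j'
  by_cases h : j' = i
  · subst h
    simp [esgl_apply, Nat.sub_add_cancel (Nat.one_le_iff_ne_zero.2 hd)]
  · simp [esgl_apply, h]

lemma sum_add_esgl (m : Fin n → ℕ) (i : Fin n) :
    ∑ j', (m + esgl i) j' = (∑ j', m j') + 1 := by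
  simp only [Pi.add_apply]
  rw [Finset.sum_add_distrib]
  simp [esgl, Finset.sum_pi_single']

lemma add_esgl_sub (i : Fin n) (m : Fin n → ℕ) :
    sfun (m + esgl i) - Finsupp.single i 1 = sfun m := by
  ext j'
  rw [Finsupp.tsub_apply]
  simp only [sfun_apply, Pi.add_apply, esgl_apply, Finsupp.single_apply]
  by_cases h : j' = i
  · subst h; simp
  · rw [if_neg h, if_neg (fun hh => h hh.symm)]; omega

lemma sfun_add_esgl (i : Fin n) (m : Fin n → ℕ) :
    sfun (m + esgl i) = sfun m + Finsupp.single i 1 := by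
  ext j'
  simp only [sfun_apply, Pi.add_apply, esgl_apply, Finsupp.add_apply,
    Finsupp.single_apply]
  by_cases h : j' = i
  · subst h; simp
  · rw [if_neg h, if_neg (fun hh => h hh.symm)]

/-- Reindexing a sum over `antidiagonalTuple n (k+1)` of terms vanishing when
the `i`-th index is zero. -/
lemma sum_antidiagonalTuple_succ {M : Type*} [AddCommMonoid M] (k : ℕ) (i : Fin n)
    (f : (Fin n → ℕ) → M) (hf : ∀ d, d i = 0 → f d = 0) :
    ∑ d ∈ Finset.Nat.antidiagonalTuple n (k + 1), f d
      = ∑ m ∈ Finset.Nat.antidiagonalTuple n k, f (m + esgl i) := by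
  classical
  rw [← Finset.sum_filter_of_ne
      (p := fun d => d i ≠ 0)
      (fun d _ h => by intro h0; exact h (hf d h0))]
  refine Finset.sum_nbij' (fun d => d - esgl i) (fun m => m + esgl i)
    ?_ ?_ ?_ ?_ ?_
  · intro d hd
    simp only [Finset.mem_filter, Finset.Nat.mem_antidiagonalTuple] at hd ⊢
    obtain ⟨hsum, hi⟩ := hd
    have h1 : ∑ j', ((d - esgl i) + esgl i) j' = k + 1 := by
      rw [sub_add_esgl hi]; exact hsum
    rw [sum_add_esgl] at h1
    omega
  · intro m hm
    simp only [Finset.Nat.mem_antidiagonalTuple] at hm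
    simp only [Finset.mem_filter, Finset.Nat.mem_antidiagonalTuple]
    refine ⟨by rw [sum_add_esgl, hm], ?_⟩
    rw [apply_add_esgl_self]
    omega
  · intro d hd
    simp only [Finset.mem_filter, Finset.Nat.mem_antidiagonalTuple] at hd
    exact sub_add_esgl hd.2
  · intro m _
    funext j'
    by_cases h : j' = i
    · subst h; simp [esgl_apply]
    · simp [esgl_apply, h]
  · intro d hd
    simp only [Finset.mem_filter, Finset.Nat.mem_antidiagonalTuple] at hd
    rw [sub_add_esgl hd.2]

/-- Derivative of a sum of monomials over an antidiagonal. -/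
lemma pderiv_sum (k : ℕ) (j : Fin n) (g : (Fin n → ℕ) → ℝ) :
    pderiv j (∑ d ∈ Finset.Nat.antidiagonalTuple n (k + 1),
        (monomial (sfun d) (g d) : MvPolynomial (Fin n) ℝ))
      = ∑ m ∈ Finset.Nat.antidiagonalTuple n k,
          monomial (sfun m) (g (m + esgl j) * ((m j : ℝ) + 1)) := by
  rw [map_sum]
  have h1 : ∀ d : Fin n → ℕ,
      pderiv j (monomial (sfun d) (g d) : MvPolynomial (Fin n) ℝ)
        = monomial (sfun d - Finsupp.single j 1) (g d * (d j : ℝ)) := by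
    intro d; rw [pderiv_monomial]; rfl
  rw [Finset.sum_congr rfl fun d _ => h1 d]
  rw [sum_antidiagonalTuple_succ k j _ (fun d hd => by simp [hd])]
  refine Finset.sum_congr rfl fun m hm => ?_
  rw [add_esgl_sub]
  congr 1
  rw [apply_add_esgl_self]
  push_cast
  ring

lemma lc_zero (ε : Fin n → ℝ) : lc ε 0 = 1 := by
  simp [lc]

/-- Key recursion for the Lauricella coefficients. -/
lemma lc_add_esgl (ε : Fin n → ℝ) (m : Fin n → ℕ) (i : Fin n) :
    lc ε (m + esgl i) * ((m i : ℝ) + 1) = lc ε m * (ε i + m i) := by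
  unfold lc
  rw [Fintype.prod_eq_mul_prod_compl i, Fintype.prod_eq_mul_prod_compl i]
  have hcompl : ∏ j ∈ ({i}ᶜ : Finset (Fin n)),
        (ascPochhammer ℝ ((m + esgl i) j)).eval (ε j) /
          (Nat.factorial ((m + esgl i) j) : ℝ)
      = ∏ j ∈ ({i}ᶜ : Finset (Fin n)),
          (ascPochhammer ℝ (m j)).eval (ε j) / (Nat.factorial (m j) : ℝ) := by
    refine Finset.prod_congr rfl fun j hj => ?_
    have hji : j ≠ i := by simpa using hj
    rw [apply_add_esgl_ne m i j hji]
  rw [hcompl, apply_add_esgl_self]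
  have hfact : ((Nat.factorial (m i + 1) : ℝ))
      = (Nat.factorial (m i) : ℝ) * ((m i : ℝ) + 1) := by
    rw [Nat.factorial_succ]; push_cast; ring
  have hpoch : (ascPochhammer ℝ (m i + 1)).eval (ε i)
      = (ascPochhammer ℝ (m i)).eval (ε i) * (ε i + m i) := ascPochhammer_succ_eval _ _
  rw [hpoch, hfact]
  have h1 : ((m i : ℝ) + 1) ≠ 0 := by positivity
  have h2 : (Nat.factorial (m i) : ℝ) ≠ 0 := Nat.cast_ne_zero.2 (Nat.factorial_ne_zero _)
  field_simp

lemma X_mul_monomial' (i : Fin n) (u : Fin n →₀ ℕ) (a : ℝ) :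
    (X i : MvPolynomial (Fin n) ℝ) * monomial u a = monomial (u + Finsupp.single i 1) a := by
  rw [X, monomial_mul, one_mul, add_comm]

end EPDaux

open EPDaux in
/-- each Lauricella coefficient polynomial `F^k` is a polynomial
solution of the Euler–Poisson–Darboux system:
`(x_i - x_j) ∂²F^k/∂x_i∂x_j = ε_j ∂F^k/∂x_i - ε_i ∂F^k/∂x_j` in `ℝ[x₁,…,xₙ]`. -/
theorem lauricellaF_satisfies_EPD (n : ℕ) (ε : Fin n → ℝ) (k : ℕ)
    (i j : Fin n) (hij : i ≠ j) :
    (X i - X j) * pderiv i (pderiv j (lauricellaF n ε k))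
      = C (ε j) * pderiv i (lauricellaF n ε k)
        - C (ε i) * pderiv j (lauricellaF n ε k) := by
  classical
  -- first derivative in direction `t`
  have hD : ∀ (t : Fin n) (k' : ℕ),
      pderiv t (lauricellaF n ε (k' + 1))
        = ∑ m ∈ Finset.Nat.antidiagonalTuple n k',
            monomial (sfun m) (lc ε m * (ε t + m t)) := by
    intro t k'
    rw [lauricellaF_eq, pderiv_sum k' t (lc ε)]
    exact Finset.sum_congr rfl fun m _ => by rw [lc_add_esgl]
  match k with
  | 0 =>
      have h0 : ∀ t : Fin n, pderiv t (lauricellaF n ε 0) = 0 := by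
        intro t
        rw [lauricellaF_eq]
        simp [Finset.Nat.antidiagonalTuple_zero_right, monomial_zero']
      rw [h0 j, h0 i, map_zero]
      ring
  | 1 =>
      have h1 : ∀ t : Fin n,
          pderiv t (lauricellaF n ε 1) = C (ε t) := by
        intro t
        rw [hD t 0]
        rw [Finset.Nat.antidiagonalTuple_zero_right, Finset.sum_singleton, sfun_zero,
          lc_zero]
        norm_num [monomial_zero']
      rw [h1 j, pderiv_C, h1 i]
      ring
  | (k' + 2) =>
      -- second derivative
      have hDD : pderiv i (pderiv j (lauricellaF n ε (k' + 2)))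
          = ∑ p ∈ Finset.Nat.antidiagonalTuple n k',
              monomial (sfun p) (lc ε p * (ε i + p i) * (ε j + p j)) := by
        rw [hD j (k' + 1), pderiv_sum k' i (fun m => lc ε m * (ε j + m j))]
        refine Finset.sum_congr rfl fun p _ => ?_
        congr 1
        rw [apply_add_esgl_ne p i j (Ne.symm hij)]
        have h2 := lc_add_esgl ε p i
        calc lc ε (p + esgl i) * (ε j + (p j : ℝ)) * ((p i : ℝ) + 1)
            = lc ε (p + esgl i) * ((p i : ℝ) + 1) * (ε j + (p j : ℝ)) := by ring
          _ = lc ε p * (ε i + (p i : ℝ)) * (ε j + (p j : ℝ)) := by rw [h2]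
      -- left-hand side
      have hL : (X i - X j) * pderiv i (pderiv j (lauricellaF n ε (k' + 2)))
          = ∑ m ∈ Finset.Nat.antidiagonalTuple n (k' + 1),
              monomial (sfun m)
                (lc ε m * ((m i : ℝ) * (ε j + m j) - (m j : ℝ) * (ε i + m i))) := by
        rw [hDD, sub_mul, Finset.mul_sum, Finset.mul_sum]
        have hXi : ∑ p ∈ Finset.Nat.antidiagonalTuple n k',
              (X i : MvPolynomial (Fin n) ℝ) *
                monomial (sfun p) (lc ε p * (ε i + p i) * (ε j + p j))
            = ∑ m ∈ Finset.Nat.antidiagonalTuple n (k' + 1),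
              monomial (sfun m) (lc ε m * ((m i : ℝ) * (ε j + m j))) := by
          rw [sum_antidiagonalTuple_succ k' i
            (fun m => monomial (sfun m) (lc ε m * ((m i : ℝ) * (ε j + m j))))
            (fun d hd => by simp [hd])]
          refine Finset.sum_congr rfl fun p _ => ?_
          rw [X_mul_monomial', ← sfun_add_esgl]
          congr 1
          symm
          rw [apply_add_esgl_ne p i j (Ne.symm hij), apply_add_esgl_self]
          have h2 := lc_add_esgl ε p i
          push_cast
          calc lc ε (p + esgl i) * (((p i : ℝ) + 1) * (ε j + (p j : ℝ)))
              = lc ε (p + esgl i) * ((p i : ℝ) + 1) * (ε j + (p j : ℝ)) := by ring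
            _ = lc ε p * (ε i + (p i : ℝ)) * (ε j + (p j : ℝ)) := by rw [h2]
        have hXj : ∑ p ∈ Finset.Nat.antidiagonalTuple n k',
              (X j : MvPolynomial (Fin n) ℝ) *
                monomial (sfun p) (lc ε p * (ε i + p i) * (ε j + p j))
            = ∑ m ∈ Finset.Nat.antidiagonalTuple n (k' + 1),
              monomial (sfun m) (lc ε m * ((m j : ℝ) * (ε i + m i))) := by
          rw [sum_antidiagonalTuple_succ k' j
            (fun m => monomial (sfun m) (lc ε m * ((m j : ℝ) * (ε i + m i))))
            (fun d hd => by simp [hd])]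
          refine Finset.sum_congr rfl fun p _ => ?_
          rw [X_mul_monomial', ← sfun_add_esgl]
          congr 1
          symm
          rw [apply_add_esgl_ne p j i hij, apply_add_esgl_self]
          have h2 := lc_add_esgl ε p j
          push_cast
          calc lc ε (p + esgl j) * (((p j : ℝ) + 1) * (ε i + (p i : ℝ)))
              = lc ε (p + esgl j) * ((p j : ℝ) + 1) * (ε i + (p i : ℝ)) := by ring
            _ = lc ε p * (ε j + (p j : ℝ)) * (ε i + (p i : ℝ)) := by rw [h2]
            _ = lc ε p * (ε i + (p i : ℝ)) * (ε j + (p j : ℝ)) := by ring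
        rw [hXi, hXj, ← Finset.sum_sub_distrib]
        refine Finset.sum_congr rfl fun m _ => ?_
        rw [← map_sub]
        congr 1
        ring
      -- right-hand side
      rw [hL, hD i (k' + 1), hD j (k' + 1), Finset.mul_sum, Finset.mul_sum,
        ← Finset.sum_sub_distrib]
      refine Finset.sum_congr rfl fun m _ => ?_
      rw [C_mul_monomial, C_mul_monomial, ← map_sub]
      congr 1
      ring
end

section
/- Fix real constants ε_1, …, ε_n and let F^k denote the Lauricella coefficient polynomials. Then for every k ≥ 0 and every index j ∈ {1, …, n}, the polynomial identity ∂F^{k+1}/∂x_j = ε_j · Σ_{l=0}^{k} x_j^l F^{k−l}(x) holds in ℝ[x_1, …, x_n]. In particular, the characteristic speed λ_j^k := (1/ε_j) ∂F^{k+1}/∂x_j equals Σ_{l+m=k} x_j^l F^m(x), and for k = 1 it equals x_j + Σ_{i=1}^n ε_i x_i. -/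
open MvPolynomial

private noncomputable def lc {n : ℕ} (ε : Fin n → ℝ) (d : Fin n → ℕ) : ℝ :=
  ∏ j, (ascPochhammer ℝ (d j)).eval (ε j) / (Nat.factorial (d j) : ℝ)

private lemma lauricella_monomial (n : ℕ) (ε : Fin n → ℝ) (k : ℕ) :
    lauricellaF n ε k = ∑ d ∈ Finset.Nat.antidiagonalTuple n k,
      monomial (Finsupp.equivFunOnFinite.symm d) (lc ε d) := by
  unfold lauricellaF lc
  refine Finset.sum_congr rfl fun d _ => ?_
  rw [monomial_eq, Finsupp.prod_pow]
  simp [Finsupp.equivFunOnFinite]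
  exact Or.inl rfl

private lemma Xmul (n : ℕ) (j : Fin n) (s : Fin n →₀ ℕ) (a : ℝ) :
    (X j : MvPolynomial (Fin n) ℝ) * monomial (s - Finsupp.single j 1) (a * (s j : ℝ))
      = monomial s (a * (s j : ℝ)) := by
  rcases Nat.eq_zero_or_pos (s j) with h | h
  · simp [h]
  · rw [X, monomial_mul, one_mul]
    have hs : Finsupp.single j 1 + (s - Finsupp.single j 1) = s := by
      ext i
      rw [Finsupp.add_apply, Finsupp.tsub_apply]
      rcases eq_or_ne i j with rfl | hi
      · simp [Nat.add_sub_cancel' h]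
      · simp [Finsupp.single_apply, Ne.symm hi]
    rw [hs]

private lemma coeff_shift {n : ℕ} (ε : Fin n → ℝ) (j : Fin n) (d : Fin n → ℕ) :
    lc ε (d + Pi.single j 1) * ((d j : ℝ) + 1) = lc ε d * (ε j + d j) := by
  set D : Fin n → ℕ := d + Pi.single j 1 with hD
  unfold lc
  rw [← Finset.mul_prod_erase Finset.univ _ (Finset.mem_univ j),
      ← Finset.mul_prod_erase Finset.univ
        (fun i => (ascPochhammer ℝ (d i)).eval (ε i) / (Nat.factorial (d i) : ℝ))
        (Finset.mem_univ j)]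
  have herase : ∀ i ∈ Finset.univ.erase j,
      (ascPochhammer ℝ (D i)).eval (ε i) / (Nat.factorial (D i) : ℝ)
        = (ascPochhammer ℝ (d i)).eval (ε i) / (Nat.factorial (d i) : ℝ) := by
    intro i hi
    have : D i = d i := by
      simp [hD, Pi.single_apply, Finset.mem_erase.mp hi |>.1]
    rw [this]
  rw [Finset.prod_congr rfl herase]
  have hj : D j = d j + 1 := by simp [hD]
  rw [hj, ascPochhammer_succ_right]
  have hfac : (Nat.factorial (d j + 1) : ℝ) = (d j + 1) * Nat.factorial (d j) := by
    rw [Nat.factorial_succ]; push_cast; ring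
  simp only [Polynomial.eval_mul, Polynomial.eval_add, Polynomial.eval_X,
    Polynomial.eval_natCast, hfac]
  have h1 : (Nat.factorial (d j) : ℝ) ≠ 0 := Nat.cast_ne_zero.mpr (Nat.factorial_ne_zero _)
  have h2 : ((d j : ℝ) + 1) ≠ 0 := by positivity
  field_simp

private lemma key (n : ℕ) (ε : Fin n → ℝ) (k : ℕ) (j : Fin n) :
    pderiv j (lauricellaF n ε (k+1))
      = C (ε j) * lauricellaF n ε k + X j * pderiv j (lauricellaF n ε k) := by
  rw [lauricella_monomial, lauricella_monomial, map_sum, map_sum, Finset.mul_sum,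
    Finset.mul_sum, ← Finset.sum_add_distrib]
  simp only [pderiv_monomial]
  have hσ : ∀ (d : Fin n → ℕ) (i : Fin n),
      (Finsupp.equivFunOnFinite.symm d) i = d i := fun d i => rfl
  -- rewrite RHS terms
  have hRHS : ∀ d ∈ Finset.Nat.antidiagonalTuple n k,
      C (ε j) * monomial (Finsupp.equivFunOnFinite.symm d) (lc ε d) +
        X j * monomial (Finsupp.equivFunOnFinite.symm d - Finsupp.single j 1)
          (lc ε d * ((Finsupp.equivFunOnFinite.symm d) j : ℝ))
      = monomial (Finsupp.equivFunOnFinite.symm d) (lc ε d * (ε j + d j)) := by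
    intro d _
    rw [Xmul, C_mul_monomial, hσ, ← map_add]
    ring_nf
  rw [Finset.sum_congr rfl hRHS]
  -- drop vanishing terms on LHS
  classical
  rw [← Finset.sum_filter_of_ne (p := fun d => d j ≠ 0)
    (f := fun d => monomial (Finsupp.equivFunOnFinite.symm d - Finsupp.single j 1)
      (lc ε d * ((Finsupp.equivFunOnFinite.symm d) j : ℝ)))
    (by intro d _ hne h0; exact absurd (by rw [hσ, h0]; simp) hne)]
  refine Finset.sum_nbij' (i := fun d i => d i - (Pi.single j 1 : Fin n → ℕ) i)
    (j := fun d => d + Pi.single j 1) ?_ ?_ ?_ ?_ ?_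
  · intro d hd
    rw [Finset.mem_filter, Finset.Nat.mem_antidiagonalTuple] at hd
    rw [Finset.Nat.mem_antidiagonalTuple]
    obtain ⟨hsum, hj0⟩ := hd
    have : ∑ i, (d i - (Pi.single j 1 : Fin n → ℕ) i) = (∑ i, d i) - ∑ i, (Pi.single j 1 : Fin n → ℕ) i := by
      rw [eq_tsub_iff_add_eq_of_le, ← Finset.sum_add_distrib]
      · exact Finset.sum_congr rfl fun i _ => by
          rcases eq_or_ne i j with rfl | hi
          · simp [Nat.sub_add_cancel (Nat.one_le_iff_ne_zero.mpr hj0)]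
          · simp [Pi.single_apply, hi]
      · exact Finset.sum_le_sum fun i _ => by
          rcases eq_or_ne i j with rfl | hi
          · simpa using Nat.one_le_iff_ne_zero.mpr hj0
          · simp [Pi.single_apply, hi]
    rw [this, hsum, Finset.sum_pi_single']
    simp
  · intro d hd
    rw [Finset.Nat.mem_antidiagonalTuple] at hd
    rw [Finset.mem_filter, Finset.Nat.mem_antidiagonalTuple]
    constructor
    · show ∑ i, (d i + (Pi.single j 1 : Fin n → ℕ) i) = k + 1
      rw [Finset.sum_add_distrib, hd, Finset.sum_pi_single']
      simp
    · simp
  · intro d hd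
    rw [Finset.mem_filter] at hd
    funext i
    rcases eq_or_ne i j with rfl | hi
    · simp [Nat.sub_add_cancel (Nat.one_le_iff_ne_zero.mpr hd.2)]
    · simp [Pi.single_apply, hi]
  · intro d _
    funext i
    rcases eq_or_ne i j with rfl | hi
    · simp
    · simp [Pi.single_apply, hi]
  · intro d hd
    rw [Finset.mem_filter] at hd
    obtain ⟨_, hj0⟩ := hd
    set d' : Fin n → ℕ := fun i => d i - (Pi.single j 1 : Fin n → ℕ) i with hd'
    have hdd : d = d' + Pi.single j 1 := by
      funext i
      rcases eq_or_ne i j with rfl | hi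
      · simp [hd', Nat.sub_add_cancel (Nat.one_le_iff_ne_zero.mpr hj0)]
      · simp [hd', Pi.single_apply, hi]
    have hexp : Finsupp.equivFunOnFinite.symm d - Finsupp.single j 1
        = Finsupp.equivFunOnFinite.symm d' := by
      ext i
      rw [Finsupp.tsub_apply, hσ, hσ]
      rcases eq_or_ne i j with rfl | hi
      · simp [hd']
      · simp [hd', Finsupp.single_apply, Ne.symm hi, Pi.single_apply, hi]
    rw [hexp]
    congr 1
    rw [hσ]
    have : (d j : ℝ) = (d' j : ℝ) + 1 := by
      rw [hdd]; simp
    rw [this, hdd, coeff_shift]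

private lemma lauricella_zero (n : ℕ) (ε : Fin n → ℝ) : lauricellaF n ε 0 = 1 := by
  unfold lauricellaF
  rw [Finset.Nat.antidiagonalTuple_zero_right, Finset.sum_singleton]
  simp

private lemma lauricella_one (n : ℕ) (ε : Fin n → ℝ) :
    lauricellaF n ε 1 = ∑ i, C (ε i) * X i := by
  classical
  have himg : Finset.Nat.antidiagonalTuple n 1
      = Finset.univ.image (fun i : Fin n => (Pi.single i 1 : Fin n → ℕ)) := by
    ext d
    rw [Finset.Nat.mem_antidiagonalTuple, Finset.mem_image]
    constructor
    · intro hd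
      have hex : ∃ i, d i ≠ 0 := by
        by_contra h
        push_neg at h
        simp [Finset.sum_congr rfl fun i _ => h i] at hd
      obtain ⟨i, hi⟩ := hex
      have hle : d i ≤ 1 := hd ▸ Finset.single_le_sum (f := d) (fun _ _ => Nat.zero_le _)
        (Finset.mem_univ i)
      have hdi : d i = 1 := le_antisymm hle (Nat.one_le_iff_ne_zero.mpr hi)
      refine ⟨i, Finset.mem_univ i, ?_⟩
      funext l
      rcases eq_or_ne l i with rfl | hl
      · simp [hdi]
      · have hrest : ∑ l ∈ Finset.univ.erase i, d l = 0 := by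
          have := Finset.add_sum_erase Finset.univ d (Finset.mem_univ i)
          omega
        have := (Finset.sum_eq_zero_iff.mp hrest) l (Finset.mem_erase.mpr ⟨hl, Finset.mem_univ l⟩)
        simp [Pi.single_apply, hl, this]
    · rintro ⟨i, -, rfl⟩
      rw [Finset.sum_pi_single']
      simp
  unfold lauricellaF
  rw [himg, Finset.sum_image (by
    intro a _ b _ hab
    by_contra hne
    have := congrFun hab a
    simp [Pi.single_apply, hne] at this)]
  refine Finset.sum_congr rfl fun i _ => ?_
  have hC : ∏ l, (ascPochhammer ℝ ((Pi.single i 1 : Fin n → ℕ) l)).eval (ε l) /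
      (Nat.factorial ((Pi.single i 1 : Fin n → ℕ) l) : ℝ) = ε i := by
    rw [Finset.prod_eq_single i]
    · simp [ascPochhammer_one]
    · intro l _ hl
      simp [Pi.single_apply, hl]
    · simp
  have hX : ∏ l, (X l : MvPolynomial (Fin n) ℝ) ^ ((Pi.single i 1 : Fin n → ℕ) l) = X i := by
    rw [Finset.prod_eq_single i]
    · simp
    · intro l _ hl
      simp [Pi.single_apply, hl]
    · simp
  rw [hC, hX]

private lemma pderiv_sum_form (n : ℕ) (ε : Fin n → ℝ) (k : ℕ) (j : Fin n) :
    pderiv j (lauricellaF n ε (k + 1))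
      = C (ε j) * ∑ l ∈ Finset.range (k + 1), X j ^ l * lauricellaF n ε (k - l) := by
  induction k with
  | zero =>
    rw [key]
    simp [lauricella_zero]
  | succ k ih =>
    rw [key, ih,
      Finset.sum_range_succ' (fun l => X j ^ l * lauricellaF n ε (k + 1 - l)) (k+1)]
    simp only [pow_zero, one_mul, Nat.sub_zero]
    rw [mul_add, add_comm]
    congr 1
    rw [Finset.mul_sum, Finset.mul_sum, Finset.mul_sum]
    refine Finset.sum_congr rfl fun l hl => ?_
    have h1 : k + 1 - (l + 1) = k - l := by omega
    rw [h1, pow_succ]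
    ring

/-- `∂F^{k+1}/∂x_j = ε_j Σ_{l=0}^k x_j^l F^{k-l}` in `ℝ[x₁,…,xₙ]`.
In particular the characteristic speed `λ_j^k = (1/ε_j) ∂F^{k+1}/∂x_j` equals
`Σ_{l+m=k} x_j^l F^m`, and for `k = 1` it equals `x_j + Σ_i ε_i x_i`. -/
theorem pderiv_lauricellaF (n : ℕ) (ε : Fin n → ℝ) (k : ℕ) (j : Fin n) :
    (pderiv j (lauricellaF n ε (k + 1))
        = C (ε j) * ∑ l ∈ Finset.range (k + 1), X j ^ l * lauricellaF n ε (k - l))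
    ∧ (ε j ≠ 0 →
        C (ε j)⁻¹ * pderiv j (lauricellaF n ε (k + 1))
          = ∑ lm ∈ Finset.HasAntidiagonal.antidiagonal k, X j ^ lm.1 * lauricellaF n ε lm.2)
    ∧ (ε j ≠ 0 →
        C (ε j)⁻¹ * pderiv j (lauricellaF n ε 2)
          = X j + ∑ i, C (ε i) * X i) := by
  have hcancel : ∀ (h : ε j ≠ 0) (p : MvPolynomial (Fin n) ℝ),
      C (ε j)⁻¹ * (C (ε j) * p) = p := by
    intro h p
    rw [← mul_assoc, ← C_mul, inv_mul_cancel₀ h, C_1, one_mul]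
  refine ⟨pderiv_sum_form n ε k j, fun h => ?_, fun h => ?_⟩
  · rw [pderiv_sum_form, hcancel h,
      Finset.Nat.sum_antidiagonal_eq_sum_range_succ_mk
        (fun lm => X j ^ lm.1 * lauricellaF n ε lm.2) k]
  · have h2 : (2 : ℕ) = 1 + 1 := rfl
    rw [h2, pderiv_sum_form, hcancel h]
    rw [Finset.sum_range_succ, Finset.sum_range_one]
    simp [lauricella_zero, lauricella_one, add_comm]
end

section
/- Fix nonzero real constants ε_1, …, ε_n, an integer m > n, and let F^k be the Lauricella coefficient polynomials. Define Φ(t; x) = Σ_{k=0}^m t_k F^{k+1}(x) for t = (t_0, …, t_m) ∈ ℝ^{m+1} and x ∈ ℝ^n. Let u : Ω → ℝ^n be a smooth map on an open set Ω ⊂ ℝ^{m+1} such that for every t ∈ Ω: (i) ∂Φ/∂x_j (t; u(t)) = 0 for all j (u(t) is a critical point of Φ(t; ·)), (ii) the components u_1(t), …, u_n(t) are pairwise distinct, and (iii) ∂²Φ/∂x_j² (t; u(t)) ≠ 0 for all j. Then for every j ∈ {1, …, n} and every k ∈ {1, …, m}, ∂u_j/∂t_k = λ_j^k(u(t)) ·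 ∂u_j/∂t_0, where λ_j^k(x) = (1/ε_j) ∂F^{k+1}/∂x_j (x); i.e., u satisfies the hierarchy of hydrodynamic type systems in Riemann invariant form. -/
open MvPolynomial

namespace LauricellaAux

variable {n : ℕ}

/-- The Lauricella coefficient of a multi-index. -/
noncomputable def lc (ε : Fin n → ℝ) (d : Fin n → ℕ) : ℝ :=
  ∏ j, (ascPochhammer ℝ (d j)).eval (ε j) / (Nat.factorial (d j) : ℝ)


/-- Shift a multi-index by one in coordinate `i`. -/
def shift (i : Fin n) (f : Fin n → ℕ) : Fin n → ℕ := fun j => f j + (if j = i then 1 else 0)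

@[simp] lemma shift_apply_self (i : Fin n) (f : Fin n → ℕ) : shift i f i = f i + 1 := by
  simp [shift]

lemma shift_apply_ne {i j : Fin n} (h : j ≠ i) (f : Fin n → ℕ) : shift i f j = f j := by
  simp [shift, h]

lemma sum_shift_apply (i : Fin n) (f : Fin n → ℕ) :
    ∑ j, shift i f j = (∑ j, f j) + 1 := by
  classical
  unfold shift
  rw [Finset.sum_add_distrib]
  congr 1
  simp

lemma lc_zero (ε : Fin n → ℝ) : lc ε 0 = 1 := by simp [lc]

lemma lc_succ (ε : Fin n → ℝ) (f : Fin n → ℕ) (i : Fin n) :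
    lc ε (shift i f) * ((f i : ℝ) + 1) = lc ε f * (ε i + f i) := by
  classical
  have key : ∀ (d : Fin n → ℕ),
      lc ε d = ((ascPochhammer ℝ (d i)).eval (ε i) / (Nat.factorial (d i) : ℝ)) *
        ∏ j ∈ Finset.univ.erase i,
          (ascPochhammer ℝ (d j)).eval (ε j) / (Nat.factorial (d j) : ℝ) :=
    fun d => (Finset.mul_prod_erase Finset.univ _ (Finset.mem_univ i)).symm
  rw [key, key]
  have he : ∀ j ∈ Finset.univ.erase i,
      (ascPochhammer ℝ ((shift i f) j)).eval (ε j) /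
        (Nat.factorial ((shift i f) j) : ℝ)
      = (ascPochhammer ℝ (f j)).eval (ε j) / (Nat.factorial (f j) : ℝ) := by
    intro j hj
    rw [shift_apply_ne (Finset.ne_of_mem_erase hj)]
  rw [Finset.prod_congr rfl he, shift_apply_self]
  have hp : (ascPochhammer ℝ (f i + 1)).eval (ε i)
      = (ascPochhammer ℝ (f i)).eval (ε i) * (ε i + f i) := by
    rw [ascPochhammer_succ_right]
    simp [Polynomial.eval_mul]
  rw [hp, Nat.factorial_succ]
  have h1 : (Nat.factorial (f i) : ℝ) ≠ 0 := Nat.cast_ne_zero.mpr (Nat.factorial_ne_zero _)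
  have h2 : ((f i : ℝ) + 1) ≠ 0 := by positivity
  push_cast
  field_simp

/-- Convert a tuple to a finsupp. -/
noncomputable def toF (d : Fin n → ℕ) : Fin n →₀ ℕ := Finsupp.equivFunOnFinite.symm d

@[simp] lemma toF_apply (d : Fin n → ℕ) (j : Fin n) : toF d j = d j := rfl

lemma toF_add_single (e : Fin n → ℕ) (i : Fin n) :
    toF (shift i e) = toF e + Finsupp.single i 1 := by
  ext j
  rcases eq_or_ne j i with h | h
  · subst h
    simp [toF, shift]
  · rw [Finsupp.add_apply, toF_apply, toF_apply, shift_apply_ne h,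
      Finsupp.single_apply, if_neg (Ne.symm h), add_zero]

lemma toF_zero : toF (0 : Fin n → ℕ) = 0 := by ext j; simp [toF]

/-- Reindexing sums over antidiagonal tuples by shifting one coordinate. -/
lemma sum_shift {M : Type*} [AddCommMonoid M] (i : Fin n) (k : ℕ) (g : (Fin n → ℕ) → M)
    (hg : ∀ d, d i = 0 → g d = 0) :
    ∑ d ∈ Finset.Nat.antidiagonalTuple n (k + 1), g d
      = ∑ f ∈ Finset.Nat.antidiagonalTuple n k, g (shift i f) := by
  classical
  rw [← Finset.sum_filter_of_ne (p := fun d => d i ≠ 0)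
    (fun d _ hd => by intro h0; exact hd (hg d h0))]
  refine Finset.sum_nbij' (fun d j => d j - (if j = i then 1 else 0)) (fun f => shift i f)
    ?_ ?_ ?_ ?_ ?_
  · intro d hd
    simp only [Finset.mem_filter, Finset.Nat.mem_antidiagonalTuple] at hd ⊢
    obtain ⟨hsum, hi⟩ := hd
    have h1 : ∑ j, ((d j - (if j = i then 1 else 0)) + (if j = i then 1 else 0))
        = ∑ j, d j := by
      refine Finset.sum_congr rfl fun j _ => ?_
      rcases eq_or_ne j i with h | h
      · subst h; simp [Nat.sub_add_cancel (Nat.one_le_iff_ne_zero.mpr hi)]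
      · simp [h]
    rw [Finset.sum_add_distrib, Finset.sum_ite_eq' Finset.univ i (fun _ => 1)] at h1
    simp only [Finset.mem_univ, if_true] at h1
    omega
  · intro f hf
    simp only [Finset.mem_filter, Finset.Nat.mem_antidiagonalTuple] at hf ⊢
    refine ⟨?_, by simp⟩
    rw [sum_shift_apply, hf]
  · intro d hd
    simp only [Finset.mem_filter, Finset.Nat.mem_antidiagonalTuple] at hd
    funext j
    rcases eq_or_ne j i with h | h
    · subst h
      simp [shift, Nat.sub_add_cancel (Nat.one_le_iff_ne_zero.mpr hd.2)]
    · simp [shift, h]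
  · intro f _
    funext j
    rcases eq_or_ne j i with h | h
    · subst h; simp [shift]
    · simp [shift, h]
  · intro d hd
    simp only [Finset.mem_filter, Finset.Nat.mem_antidiagonalTuple] at hd
    congr 1
    funext j
    rcases eq_or_ne j i with h | h
    · subst h
      simp [shift, Nat.sub_add_cancel (Nat.one_le_iff_ne_zero.mpr hd.2)]
    · simp [shift, h]

lemma lauricellaF_eq (ε : Fin n → ℝ) (k : ℕ) :
    lauricellaF n ε k
      = ∑ d ∈ Finset.Nat.antidiagonalTuple n k, monomial (toF d) (lc ε d) := by
  refine Finset.sum_congr rfl fun d _ => ?_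
  rw [monomial_eq, Finsupp.prod_fintype]
  · rfl
  · intro j; exact pow_zero _

/-- First derivative of the Lauricella polynomial. -/
lemma pderiv_lauricellaF (ε : Fin n → ℝ) (i : Fin n) (k : ℕ) :
    pderiv i (lauricellaF n ε (k + 1))
      = ∑ f ∈ Finset.Nat.antidiagonalTuple n k,
          monomial (toF f) (lc ε f * (ε i + f i)) := by
  classical
  rw [lauricellaF_eq, map_sum]
  rw [sum_shift i k (fun d => pderiv i (monomial (toF d) (lc ε d)))
    (fun d h0 => by simp [pderiv_monomial, h0])]
  refine Finset.sum_congr rfl fun f _ => ?_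
  rw [pderiv_monomial]
  have hi : (toF (shift i f)) i = f i + 1 := by simp
  rw [hi, toF_add_single, add_tsub_cancel_right]
  congr 1
  push_cast
  exact lc_succ ε f i

/-- Second (mixed) derivative of the Lauricella polynomial. -/
lemma pderiv2_lauricellaF (ε : Fin n → ℝ) (i j : Fin n) (hij : i ≠ j) (k : ℕ) :
    pderiv i (pderiv j (lauricellaF n ε (k + 2)))
      = ∑ e ∈ Finset.Nat.antidiagonalTuple n k,
          monomial (toF e) (lc ε e * (ε i + e i) * (ε j + e j)) := by
  classical
  rw [show k + 2 = (k + 1) + 1 from rfl, pderiv_lauricellaF ε j (k + 1), map_sum]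
  rw [sum_shift i k (fun f => pderiv i (monomial (toF f) (lc ε f * (ε j + f j))))
    (fun f h0 => by simp [pderiv_monomial, h0])]
  refine Finset.sum_congr rfl fun e _ => ?_
  rw [pderiv_monomial]
  have h1 : (toF (shift i e)) i = e i + 1 := by simp
  have h2 : (shift i e) j = e j := shift_apply_ne (Ne.symm hij) e
  rw [h1, h2, toF_add_single, add_tsub_cancel_right]
  congr 1
  have hs := lc_succ ε e i
  push_cast
  linear_combination (ε j + (e j : ℝ)) * hs

/-- The Euler-Poisson-Darboux identity for Lauricella polynomials. -/
lemma epd (ε : Fin n → ℝ) (i j : Fin n) (hij : i ≠ j) (k : ℕ) :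
    (X i - X j) * pderiv i (pderiv j (lauricellaF n ε k))
      = C (ε j) * pderiv i (lauricellaF n ε k)
        - C (ε i) * pderiv j (lauricellaF n ε k) := by
  classical
  match k with
  | 0 =>
    have h0 : lauricellaF n ε 0 = monomial 0 (1 : ℝ) := by
      rw [lauricellaF_eq, Finset.Nat.antidiagonalTuple_zero_right, Finset.sum_singleton,
        toF_zero, lc_zero]
    rw [h0]
    simp [pderiv_monomial]
  | 1 =>
    have h1 : ∀ l : Fin n, pderiv l (lauricellaF n ε 1) = C (ε l) := by
      intro l
      rw [show (1 : ℕ) = 0 + 1 from rfl, pderiv_lauricellaF ε l 0,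
        Finset.Nat.antidiagonalTuple_zero_right, Finset.sum_singleton, toF_zero, lc_zero]
      rw [C_apply]
      congr 1
      norm_num
    rw [h1 i, h1 j]
    simp [pderiv_C]
    ring
  | (k + 2) =>
    rw [pderiv2_lauricellaF ε i j hij k, pderiv_lauricellaF ε i (k + 1),
      pderiv_lauricellaF ε j (k + 1)]
    rw [sub_mul, Finset.mul_sum, Finset.mul_sum, Finset.mul_sum, Finset.mul_sum]
    have hXmul : ∀ (l : Fin n) (s : Fin n →₀ ℕ) (a : ℝ),
        (X l : MvPolynomial (Fin n) ℝ) * monomial s a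
          = monomial (s + Finsupp.single l 1) a := by
      intro l s a
      rw [X, monomial_mul, one_mul, add_comm]
    have hLi : ∑ e ∈ Finset.Nat.antidiagonalTuple n k,
        (X i : MvPolynomial (Fin n) ℝ) * monomial (toF e) (lc ε e * (ε i + e i) * (ε j + e j))
        = ∑ f ∈ Finset.Nat.antidiagonalTuple n (k + 1),
            monomial (toF f) (lc ε f * (f i : ℝ) * (ε j + f j)) := by
      rw [sum_shift i k (fun f => monomial (toF f) (lc ε f * (f i : ℝ) * (ε j + f j)))
        (fun f h0 => by simp [h0])]
      refine Finset.sum_congr rfl fun e _ => ?_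
      rw [hXmul]
      have h2 : (shift i e) j = e j := shift_apply_ne (Ne.symm hij) e
      have h1 : (shift i e) i = e i + 1 := shift_apply_self i e
      rw [h1, h2, toF_add_single, add_comm (toF e) (Finsupp.single i 1)]
      congr 1
      have hs := lc_succ ε e i
      push_cast
      linear_combination (-(ε j + (e j : ℝ))) * hs
    have hLj : ∑ e ∈ Finset.Nat.antidiagonalTuple n k,
        (X j : MvPolynomial (Fin n) ℝ) * monomial (toF e) (lc ε e * (ε i + e i) * (ε j + e j))
        = ∑ f ∈ Finset.Nat.antidiagonalTuple n (k + 1),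
            monomial (toF f) (lc ε f * (f j : ℝ) * (ε i + f i)) := by
      rw [sum_shift j k (fun f => monomial (toF f) (lc ε f * (f j : ℝ) * (ε i + f i)))
        (fun f h0 => by simp [h0])]
      refine Finset.sum_congr rfl fun e _ => ?_
      rw [hXmul]
      have h2 : (shift j e) i = e i := shift_apply_ne hij e
      have h1 : (shift j e) j = e j + 1 := shift_apply_self j e
      rw [h1, h2, toF_add_single, add_comm (toF e) (Finsupp.single j 1)]
      congr 1
      have hs := lc_succ ε e j
      push_cast
      linear_combination (-(ε i + (e i : ℝ))) * hs
    rw [hLi, hLj, ← Finset.sum_sub_distrib, ← Finset.sum_sub_distrib]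
    refine Finset.sum_congr rfl fun f _ => ?_
    rw [C_mul_monomial, C_mul_monomial, ← map_sub, ← map_sub]
    congr 1
    ring

/-- The first Lauricella polynomial has constant derivatives. -/
lemma eval_pderiv_one (ε : Fin n → ℝ) (i : Fin n) (x : Fin n → ℝ) :
    eval x (pderiv i (lauricellaF n ε 1)) = ε i := by
  rw [show (1 : ℕ) = 0 + 1 from rfl, pderiv_lauricellaF ε i 0,
    Finset.Nat.antidiagonalTuple_zero_right, Finset.sum_singleton, toF_zero, lc_zero]
  simp [eval_monomial]

/-- Derivative of evaluation of a multivariate polynomial along a curve. -/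
lemma hasDerivAt_eval (p : MvPolynomial (Fin n) ℝ) (y : ℝ → Fin n → ℝ)
    (y' : Fin n → ℝ) (s : ℝ) (hy : ∀ i, HasDerivAt (fun r => y r i) (y' i) s) :
    HasDerivAt (fun r => eval (y r) p) (∑ i, eval (y s) (pderiv i p) * y' i) s := by
  classical
  induction p using MvPolynomial.induction_on with
  | C a =>
    simpa [pderiv_C] using (hasDerivAt_const s a)
  | add p q hp hq =>
    have := hp.fun_add hq
    simpa [Finset.sum_add_distrib, add_mul] using this
  | mul_X p i hp =>
    have h := hp.mul (hy i)
    have heq : (∑ l, eval (y s) (pderiv l p) * y' l) * y s i + eval (y s) p * y' i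
        = ∑ l, eval (y s) (pderiv l (p * X i)) * y' l := by
      simp only [pderiv_mul, pderiv_X, eval_add, eval_mul, eval_X, add_mul, Finset.sum_add_distrib,
        Finset.sum_mul]
      congr 1
      · exact Finset.sum_congr rfl fun l _ => by ring
      · rw [Finset.sum_eq_single i]
        · simp
        · intro l _ hl
          simp [Pi.single_eq_of_ne (Ne.symm hl)]
        · simp
    have : HasDerivAt (fun r => eval (y r) p * y r i)
        ((∑ l, eval (y s) (pderiv l p) * y' l) * y s i + eval (y s) p * y' i) s := h
    rw [heq] at this
    simpa [eval_mul] using this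

end LauricellaAux

open LauricellaAux in
/-- Let `Φ(t;x) = Σ_{k=0}^m t_k F^{k+1}(x)` with nonzero `ε_j` and
`m > n`.  If `u : Ω → ℝⁿ` is smooth on an open set `Ω ⊆ ℝ^{m+1}`, `u(t)` is a
critical point of `Φ(t;·)` for each `t ∈ Ω`, the components of `u(t)` are
pairwise distinct, and `∂²Φ/∂x_j²(t;u(t)) ≠ 0`, then `u` satisfies the
hierarchy of hydrodynamic type systems in Riemann invariant form
`∂u_j/∂t_k = λ_j^k(u) ∂u_j/∂t_0` with `λ_j^k = (1/ε_j) ∂F^{k+1}/∂x_j`. -/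
theorem lauricella_hydrodynamic_hierarchy (n m : ℕ) (hmn : n < m)
    (ε : Fin n → ℝ) (hε : ∀ j, ε j ≠ 0)
    (Ω : Set (Fin (m + 1) → ℝ)) (hΩ : IsOpen Ω)
    (u : (Fin (m + 1) → ℝ) → (Fin n → ℝ)) (hu : ContDiffOn ℝ (⊤ : ℕ∞) u Ω)
    (hcrit : ∀ t ∈ Ω, ∀ j : Fin n,
      ∑ k : Fin (m + 1),
        t k * eval (u t) (pderiv j (lauricellaF n ε (k.1 + 1))) = 0)
    (hdist : ∀ t ∈ Ω, ∀ i j : Fin n, i ≠ j → u t i ≠ u t j)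
    (hnd : ∀ t ∈ Ω, ∀ j : Fin n,
      ∑ k : Fin (m + 1),
        t k * eval (u t) (pderiv j (pderiv j (lauricellaF n ε (k.1 + 1)))) ≠ 0) :
    ∀ t ∈ Ω, ∀ j : Fin n, ∀ k : Fin (m + 1), k ≠ 0 →
      fderiv ℝ (fun s => u s j) t (Pi.single k 1)
        = (1 / ε j) * eval (u t) (pderiv j (lauricellaF n ε (k.1 + 1))) *
            fderiv ℝ (fun s => u s j) t (Pi.single 0 1) := by
  intro t ht j k hk
  classical
  have hud : DifferentiableAt ℝ u t :=
    (hu.contDiffAt (hΩ.mem_nhds ht)).differentiableAt (by simp)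
  set A : ℝ := ∑ l : Fin (m + 1),
      t l * eval (u t) (pderiv j (pderiv j (lauricellaF n ε (l.1 + 1)))) with hA
  have hAne : A ≠ 0 := hnd t ht j
  -- the key identity obtained by differentiating the critical point equation in direction κ
  have key : ∀ κ : Fin (m + 1),
      eval (u t) (pderiv j (lauricellaF n ε (κ.1 + 1)))
        + A * fderiv ℝ (fun s => u s j) t (Pi.single κ 1) = 0 := by
    intro κ
    set w : Fin (m + 1) → ℝ := Pi.single κ 1 with hw
    set γ : ℝ → (Fin (m + 1) → ℝ) := fun s => t + s • w with hγ
    have hγ0 : γ 0 = t := by simp [hγ]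
    have hγd : HasDerivAt γ w 0 := by
      rw [hγ]
      simpa using HasDerivAt.const_add t (((hasDerivAt_id (0 : ℝ)).smul_const w))
    have hcomp : ∀ i : Fin n, HasDerivAt (fun s => u (γ s) i)
        (fderiv ℝ (fun s => u s i) t w) 0 := by
      intro i
      have hdi : DifferentiableAt ℝ (fun s => u s i) t :=
        (ContinuousLinearMap.proj i : ((Fin n) → ℝ) →L[ℝ] ℝ).differentiableAt.comp t hud
      have h1 : HasFDerivAt (fun s => u s i) (fderiv ℝ (fun s => u s i) t) (γ 0) := by
        rw [hγ0]; exact hdi.hasFDerivAt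
      have h2 := HasFDerivAt.comp_hasDerivAt (f := γ) (x := (0 : ℝ)) h1 hγd
      simpa [Function.comp_def] using h2
    -- compute the derivative of φ(s) = Σ_l γ(s)_l ⬝ ∂_j F^{l+1}(u(γ(s)))
    have hφd : HasDerivAt (fun s => ∑ l : Fin (m + 1),
        γ s l * eval (u (γ s)) (pderiv j (lauricellaF n ε (l.1 + 1))))
        (∑ l : Fin (m + 1), (w l * eval (u t) (pderiv j (lauricellaF n ε (l.1 + 1)))
          + t l * ∑ i, eval (u t) (pderiv i (pderiv j (lauricellaF n ε (l.1 + 1))))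
              * fderiv ℝ (fun s => u s i) t w)) 0 := by
      apply HasDerivAt.fun_sum
      intro l _
      have hγl : HasDerivAt (fun s => γ s l) (w l) 0 := by
        have h3 : HasDerivAt (fun s : ℝ => t l + s * w l) (w l) 0 := by
          simpa using HasDerivAt.const_add (t l) (hasDerivAt_mul_const (w l))
        have : (fun s => γ s l) = fun s : ℝ => t l + s * w l := by
          funext s; simp [hγ, smul_eq_mul]
        rw [this]; exact h3
      have hev := hasDerivAt_eval (pderiv j (lauricellaF n ε (l.1 + 1))) (fun s => u (γ s))
        (fun i => fderiv ℝ (fun s => u s i) t w) 0 hcomp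
      have hmul := hγl.fun_mul hev
      simpa [hγ0] using hmul
    -- φ vanishes near 0
    have hγc : Continuous γ := by
      rw [hγ]; exact continuous_const.add (continuous_id.smul continuous_const)
    have hmem : ∀ᶠ s in nhds (0 : ℝ), γ s ∈ Ω := by
      have hΩn : Ω ∈ nhds (γ 0) := hΩ.mem_nhds (by rwa [hγ0])
      exact hγc.continuousAt.preimage_mem_nhds hΩn
    have hzero : (fun s => ∑ l : Fin (m + 1),
        γ s l * eval (u (γ s)) (pderiv j (lauricellaF n ε (l.1 + 1))))
          =ᶠ[nhds (0 : ℝ)] fun _ => (0 : ℝ) := by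
      filter_upwards [hmem] with s hs
      exact hcrit (γ s) hs j
    have hφ0 : HasDerivAt (fun s => ∑ l : Fin (m + 1),
        γ s l * eval (u (γ s)) (pderiv j (lauricellaF n ε (l.1 + 1)))) 0 0 :=
      (hasDerivAt_const (0 : ℝ) (0 : ℝ)).congr_of_eventuallyEq hzero
    have hD : ∑ l : Fin (m + 1), (w l * eval (u t) (pderiv j (lauricellaF n ε (l.1 + 1)))
          + t l * ∑ i, eval (u t) (pderiv i (pderiv j (lauricellaF n ε (l.1 + 1))))
              * fderiv ℝ (fun s => u s i) t w) = 0 := hφd.unique hφ0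
    -- simplify the derivative identity
    rw [Finset.sum_add_distrib] at hD
    have hsum : ∑ l : Fin (m + 1), w l * eval (u t) (pderiv j (lauricellaF n ε (l.1 + 1)))
        = eval (u t) (pderiv j (lauricellaF n ε (κ.1 + 1))) := by
      rw [hw]
      rw [Finset.sum_eq_single κ]
      · simp
      · intro l _ hl
        simp [Pi.single_eq_of_ne hl]
      · simp
    have hmix : ∀ i : Fin n, i ≠ j →
        ∑ l : Fin (m + 1),
          t l * eval (u t) (pderiv i (pderiv j (lauricellaF n ε (l.1 + 1)))) = 0 := by
      intro i hij
      have hx : u t i - u t j ≠ 0 := sub_ne_zero_of_ne (hdist t ht i j hij)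
      have hepd : ∀ l : ℕ,
          (u t i - u t j) * eval (u t) (pderiv i (pderiv j (lauricellaF n ε l)))
            = ε j * eval (u t) (pderiv i (lauricellaF n ε l))
              - ε i * eval (u t) (pderiv j (lauricellaF n ε l)) := by
        intro l
        have h5 := congrArg (eval (u t)) (epd ε i j hij l)
        simpa using h5
      have h2 : (u t i - u t j) * ∑ l : Fin (m + 1),
          t l * eval (u t) (pderiv i (pderiv j (lauricellaF n ε (l.1 + 1)))) = 0 := by
        rw [Finset.mul_sum]
        have h6 : ∀ l : Fin (m + 1),
            (u t i - u t j) * (t l * eval (u t) (pderiv i (pderiv j (lauricellaF n ε (l.1 + 1)))))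
              = ε j * (t l * eval (u t) (pderiv i (lauricellaF n ε (l.1 + 1))))
                - ε i * (t l * eval (u t) (pderiv j (lauricellaF n ε (l.1 + 1)))) := by
          intro l
          linear_combination t l * hepd (l.1 + 1)
        rw [Finset.sum_congr rfl (fun l _ => h6 l), Finset.sum_sub_distrib,
          ← Finset.mul_sum, ← Finset.mul_sum, hcrit t ht i, hcrit t ht j]
        ring
      exact (mul_eq_zero.mp h2).resolve_left hx
    have hswap : ∑ l : Fin (m + 1),
        t l * ∑ i, eval (u t) (pderiv i (pderiv j (lauricellaF n ε (l.1 + 1))))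
          * fderiv ℝ (fun s => u s i) t w
        = ∑ i, (∑ l : Fin (m + 1),
            t l * eval (u t) (pderiv i (pderiv j (lauricellaF n ε (l.1 + 1)))))
              * fderiv ℝ (fun s => u s i) t w := by
      simp only [Finset.mul_sum, Finset.sum_mul]
      rw [Finset.sum_comm]
      exact Finset.sum_congr rfl fun i _ => Finset.sum_congr rfl fun l _ => by ring
    have hsplit : ∑ i, (∑ l : Fin (m + 1),
        t l * eval (u t) (pderiv i (pderiv j (lauricellaF n ε (l.1 + 1)))))
          * fderiv ℝ (fun s => u s i) t w
        = A * fderiv ℝ (fun s => u s j) t w := by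
      rw [Finset.sum_eq_single j (fun i _ hij => by rw [hmix i hij, zero_mul])
        (fun h => absurd (Finset.mem_univ j) h), ← hA]
    rw [hsum, hswap, hsplit] at hD
    rw [hw] at hD
    exact hD
  -- combine the identities for direction k and direction 0
  have e1 := key k
  have e2 := key 0
  rw [show ((0 : Fin (m + 1)).1 + 1) = 1 from rfl, eval_pderiv_one ε j (u t)] at e2
  have h3 : A * (ε j * fderiv ℝ (fun s => u s j) t (Pi.single k 1)
      - eval (u t) (pderiv j (lauricellaF n ε (k.1 + 1)))
        * fderiv ℝ (fun s => u s j) t (Pi.single 0 1)) = 0 := by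
    linear_combination (ε j) * e1 - eval (u t) (pderiv j (lauricellaF n ε (k.1 + 1))) * e2
  have h4 := (mul_eq_zero.mp h3).resolve_left hAne
  have hεj := hε j
  field_simp
  linear_combination h4
end

section
/- Fix a nonzero real constant ε, an integer m ≥ 2, and define Φ₁(t; x, y) = Σ_{k=0}^m t_k F^{k+1}_1(x, y), where F^k_1(x, y) = Σ_{i+j=k} ((ε)_i/(i!·j!)) x^i y^j. Let (u_1, u_2) : Ω → ℝ² be a smooth map on an open set Ω ⊂ ℝ^{m+1} such that for every t ∈ Ω: (i) ∂Φ₁/∂x (t; u_1(t), u_2(t)) = 0 and ∂Φ₁/∂y (t; u_1(t), u_2(t)) = 0, (ii) u_1(t) ≠ 0, and (iii) ∂²Φ₁/∂x² and ∂²Φ₁/∂y² are nonzero at (t; u_1(t), u_2(t)). Then for every k ∈ {1, …, m}: ∂u_1/∂t_k = λ_1^k ∂u_1/∂t_0 and ∂u_2/∂t_k = λ_2^k ∂u_2/∂t_0, where λ_1^k = (1/ε) ∂F^{k+1}_1/∂x evaluated at (u_1, u_2) and λ_2^k = F^k_1(u_1, u_2). In particular u_1 and u_2 are Riemann invariants,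 and for k = 1 the speeds are λ_1^1 = (1+ε)u_1 + u_2 and λ_2^1 = ε u_1 + u_2. -/
open MvPolynomial

/-- The confluent Lauricella coefficient polynomials
`F¹ₖ(x,y) = Σ_{i+j=k} ((ε)_i/(i!·j!)) x^i y^j` (here `X 0 = x`, `X 1 = y`). -/
noncomputable def F1 (ε : ℝ) (k : ℕ) : MvPolynomial (Fin 2) ℝ :=
  ∑ ij ∈ Finset.HasAntidiagonal.antidiagonal k,
    C ((ascPochhammer ℝ ij.1).eval ε /
        ((Nat.factorial ij.1 * Nat.factorial ij.2 : ℕ) : ℝ)) *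
      X 0 ^ ij.1 * X 1 ^ ij.2

/-- Auxiliary: `G1 ε n = ∂F1(n+1)/∂x`, with coefficients `(ε)_{i+1}/(i!·j!)`. -/
noncomputable def G1 (ε : ℝ) (k : ℕ) : MvPolynomial (Fin 2) ℝ :=
  ∑ ij ∈ Finset.HasAntidiagonal.antidiagonal k,
    C ((ascPochhammer ℝ (ij.1 + 1)).eval ε /
        ((Nat.factorial ij.1 * Nat.factorial ij.2 : ℕ) : ℝ)) *
      X 0 ^ ij.1 * X 1 ^ ij.2

lemma F1_zero (ε : ℝ) : F1 ε 0 = 1 := by simp [F1]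

lemma G1_zero (ε : ℝ) : G1 ε 0 = C ε := by simp [G1, ascPochhammer_one]

/-- Generic reindexing lemma for `∂/∂y` of an antidiagonal sum. -/
lemma pderiv1_sum (c : ℕ → ℝ) (n : ℕ) :
    pderiv (1 : Fin 2) (∑ ij ∈ Finset.HasAntidiagonal.antidiagonal (n+1),
      (C (c ij.1 / ((Nat.factorial ij.1 * Nat.factorial ij.2 : ℕ) : ℝ)) *
        X 0 ^ ij.1 * X 1 ^ ij.2 : MvPolynomial (Fin 2) ℝ))
    = ∑ ij ∈ Finset.HasAntidiagonal.antidiagonal n,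
      C (c ij.1 / ((Nat.factorial ij.1 * Nat.factorial ij.2 : ℕ) : ℝ)) *
        X 0 ^ ij.1 * X 1 ^ ij.2 := by
  rw [map_sum, Finset.Nat.sum_antidiagonal_succ']
  have h1 : pderiv (1 : Fin 2)
      ((C (c (n+1) / ((Nat.factorial (n+1) * Nat.factorial 0 : ℕ) : ℝ)) *
        X 0 ^ (n+1) * X 1 ^ 0 : MvPolynomial (Fin 2) ℝ)) = 0 := by
    simp [pderiv_mul, pderiv_pow, pderiv_C, pderiv_X_of_ne (show (0:Fin 2) ≠ 1 by decide)]
  rw [h1, zero_add]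
  refine Finset.sum_congr rfl fun ij _ => ?_
  have : pderiv (1 : Fin 2)
      ((C (c ij.1 / ((Nat.factorial ij.1 * Nat.factorial (ij.2+1) : ℕ) : ℝ)) *
        X 0 ^ ij.1 * X 1 ^ (ij.2+1) : MvPolynomial (Fin 2) ℝ))
      = C (c ij.1 / ((Nat.factorial ij.1 * Nat.factorial (ij.2+1) : ℕ) : ℝ) * (ij.2+1)) *
          X 0 ^ ij.1 * X 1 ^ ij.2 := by
    simp [pderiv_mul, pderiv_pow, pderiv_C, pderiv_X_of_ne (show (0:Fin 2) ≠ 1 by decide), C_mul]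
    ring
  rw [this]
  congr 2
  have h2 : ((Nat.factorial ij.2 : ℝ)) ≠ 0 := Nat.cast_ne_zero.2 (Nat.factorial_ne_zero _)
  have h3 : ((Nat.factorial ij.1 : ℝ)) ≠ 0 := Nat.cast_ne_zero.2 (Nat.factorial_ne_zero _)
  push_cast [Nat.factorial_succ]
  field_simp

lemma pderiv1_F1 (ε : ℝ) (n : ℕ) : pderiv (1 : Fin 2) (F1 ε (n+1)) = F1 ε n := by
  rw [F1, F1]; exact pderiv1_sum (fun i => (ascPochhammer ℝ i).eval ε) n

lemma pderiv1_G1 (ε : ℝ) (n : ℕ) : pderiv (1 : Fin 2) (G1 ε (n+1)) = G1 ε n := by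
  rw [G1, G1]; exact pderiv1_sum (fun i => (ascPochhammer ℝ (i+1)).eval ε) n

lemma pderiv0_F1 (ε : ℝ) (n : ℕ) : pderiv (0 : Fin 2) (F1 ε (n+1)) = G1 ε n := by
  rw [F1, map_sum, Finset.Nat.sum_antidiagonal_succ, G1]
  have h1 : pderiv (0 : Fin 2)
      ((C ((ascPochhammer ℝ 0).eval ε / ((Nat.factorial 0 * Nat.factorial (n+1) : ℕ) : ℝ)) *
        X 0 ^ 0 * X 1 ^ (n+1) : MvPolynomial (Fin 2) ℝ)) = 0 := by
    simp [pderiv_mul, pderiv_pow, pderiv_C, pderiv_X_of_ne (show (1:Fin 2) ≠ 0 by decide)]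
  rw [h1, zero_add]
  refine Finset.sum_congr rfl fun ij _ => ?_
  have : pderiv (0 : Fin 2)
      ((C ((ascPochhammer ℝ (ij.1+1)).eval ε /
          ((Nat.factorial (ij.1+1) * Nat.factorial ij.2 : ℕ) : ℝ)) *
        X 0 ^ (ij.1+1) * X 1 ^ ij.2 : MvPolynomial (Fin 2) ℝ))
      = C ((ascPochhammer ℝ (ij.1+1)).eval ε /
          ((Nat.factorial (ij.1+1) * Nat.factorial ij.2 : ℕ) : ℝ) * (ij.1+1)) *
          X 0 ^ ij.1 * X 1 ^ ij.2 := by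
    simp [pderiv_mul, pderiv_pow, pderiv_C, pderiv_X_of_ne (show (1:Fin 2) ≠ 0 by decide), C_mul]
    ring
  rw [this]
  congr 2
  have h2 : ((Nat.factorial ij.2 : ℝ)) ≠ 0 := Nat.cast_ne_zero.2 (Nat.factorial_ne_zero _)
  have h3 : ((Nat.factorial ij.1 : ℝ)) ≠ 0 := Nat.cast_ne_zero.2 (Nat.factorial_ne_zero _)
  push_cast [Nat.factorial_succ]
  field_simp

lemma G1_succ (ε : ℝ) (n : ℕ) :
    G1 ε (n+1) = X 0 * G1 ε n + C ε * F1 ε (n+1) := by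
  rw [G1, F1, Finset.Nat.sum_antidiagonal_succ, Finset.Nat.sum_antidiagonal_succ, G1]
  have e0 : (C ((ascPochhammer ℝ (0+1)).eval ε /
        ((Nat.factorial 0 * Nat.factorial (n+1) : ℕ) : ℝ)) *
      X 0 ^ 0 * X 1 ^ (n+1) : MvPolynomial (Fin 2) ℝ)
      = C ε * (C ((ascPochhammer ℝ 0).eval ε /
        ((Nat.factorial 0 * Nat.factorial (n+1) : ℕ) : ℝ)) * X 0 ^ 0 * X 1 ^ (n+1)) := by
    rw [← mul_assoc, ← mul_assoc, ← C_mul]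
    congr 2
    simp [ascPochhammer_one, div_eq_mul_inv]
  have e1 : ∀ ij ∈ Finset.HasAntidiagonal.antidiagonal n,
      (C ((ascPochhammer ℝ (ij.1+1+1)).eval ε /
          ((Nat.factorial (ij.1+1) * Nat.factorial ij.2 : ℕ) : ℝ)) *
        X 0 ^ (ij.1+1) * X 1 ^ ij.2 : MvPolynomial (Fin 2) ℝ)
      = X 0 * (C ((ascPochhammer ℝ (ij.1+1)).eval ε /
          ((Nat.factorial ij.1 * Nat.factorial ij.2 : ℕ) : ℝ)) * X 0 ^ ij.1 * X 1 ^ ij.2)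
        + C ε * (C ((ascPochhammer ℝ (ij.1+1)).eval ε /
              ((Nat.factorial (ij.1+1) * Nat.factorial ij.2 : ℕ) : ℝ)) *
            X 0 ^ (ij.1+1) * X 1 ^ ij.2) := by
    intro ij _
    have h2 : ((Nat.factorial ij.2 : ℝ)) ≠ 0 := Nat.cast_ne_zero.2 (Nat.factorial_ne_zero _)
    have h3 : ((Nat.factorial ij.1 : ℝ)) ≠ 0 := Nat.cast_ne_zero.2 (Nat.factorial_ne_zero _)
    have hco : (ascPochhammer ℝ (ij.1+1+1)).eval ε /
          ((Nat.factorial (ij.1+1) * Nat.factorial ij.2 : ℕ) : ℝ)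
        = (ascPochhammer ℝ (ij.1+1)).eval ε / ((Nat.factorial ij.1 * Nat.factorial ij.2 : ℕ) : ℝ)
          + ε * ((ascPochhammer ℝ (ij.1+1)).eval ε /
              ((Nat.factorial (ij.1+1) * Nat.factorial ij.2 : ℕ) : ℝ)) := by
      rw [ascPochhammer_succ_eval]
      push_cast [Nat.factorial_succ]
      field_simp
      ring
    rw [hco, C_add, C_mul]
    ring
  rw [Finset.sum_congr rfl e1, Finset.sum_add_distrib, ← Finset.mul_sum, ← Finset.mul_sum, e0]
  ring

/-- The confluent EPD equation for `F1 ε (n+1)`. -/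
lemma epd_F1 (ε : ℝ) (n : ℕ) :
    X 0 * pderiv (1 : Fin 2) (pderiv (0 : Fin 2) (F1 ε (n+1)))
      = pderiv (0 : Fin 2) (F1 ε (n+1)) - C ε * pderiv (1 : Fin 2) (F1 ε (n+1)) := by
  cases n with
  | zero =>
      rw [pderiv0_F1, G1_zero, pderiv1_F1, F1_zero]
      simp [pderiv_C]
  | succ n =>
      rw [pderiv0_F1, pderiv1_G1, pderiv1_F1, G1_succ]
      ring

/-- Mixed partials of `F1` commute. -/
lemma pderiv_comm_F1 (ε : ℝ) (n : ℕ) :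
    pderiv (0 : Fin 2) (pderiv (1 : Fin 2) (F1 ε (n+1)))
      = pderiv (1 : Fin 2) (pderiv (0 : Fin 2) (F1 ε (n+1))) := by
  cases n with
  | zero =>
      rw [pderiv1_F1, F1_zero, pderiv0_F1, G1_zero]
      simp [pderiv_C, pderiv_one]
  | succ n =>
      rw [pderiv1_F1, pderiv0_F1, pderiv0_F1, pderiv1_G1]

lemma F1_one (ε : ℝ) : F1 ε 1 = C ε * X 0 + X 1 := by
  rw [F1, Finset.Nat.sum_antidiagonal_succ]
  simp [ascPochhammer_one]
  ring

lemma G1_one (ε : ℝ) : G1 ε 1 = C (ε * (ε+1)) * X 0 + C ε * X 1 := by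
  rw [G1, Finset.Nat.sum_antidiagonal_succ]
  have h2 : (ascPochhammer ℝ 2).eval ε = ε * (ε + 1) := by
    rw [show (2:ℕ) = 1 + 1 from rfl, ascPochhammer_succ_eval, ascPochhammer_one]
    simp
  simp [ascPochhammer_one, h2]
  ring

/-- Chain rule for evaluating a 2-variable polynomial along two differentiable maps. -/
lemma hasFDerivAt_eval_poly {E : Type*} [NormedAddCommGroup E] [NormedSpace ℝ E]
    (P : MvPolynomial (Fin 2) ℝ) {f g : E → ℝ} {t : E} {f' g' : E →L[ℝ] ℝ}
    (hf : HasFDerivAt f f' t) (hg : HasFDerivAt g g' t) :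
    HasFDerivAt (fun s => eval ![f s, g s] P)
      (eval ![f t, g t] (pderiv (0 : Fin 2) P) • f'
        + eval ![f t, g t] (pderiv (1 : Fin 2) P) • g') t := by
  induction P using MvPolynomial.induction_on with
  | C a =>
      simp only [eval_C, pderiv_C, map_zero, zero_smul, add_zero]
      exact hasFDerivAt_const a t
  | add p q hp hq =>
      have := hp.fun_add hq
      simp only [map_add] at this ⊢
      exact this.congr_fderiv (by module)
  | mul_X p i hp =>
      have hcomp : ∀ s, eval ![f s, g s] (p * X i) = eval ![f s, g s] p * (![f s, g s] i) := by
        intro s; simp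
      rcases (by decide : ∀ j : Fin 2, j = 0 ∨ j = 1) i with rfl | rfl
      · have hvi : HasFDerivAt (fun s => (![f s, g s] (0:Fin 2) : ℝ)) f' t := by simpa using hf
        have hmul := hp.fun_mul hvi
        have h' : HasFDerivAt (fun s => eval ![f s, g s] (p * X (0:Fin 2)))
            ((eval ![f t, g t] p) • f'
              + (f t) • (eval ![f t, g t] (pderiv (0:Fin 2) p) • f'
                  + eval ![f t, g t] (pderiv (1:Fin 2) p) • g')) t := by
          simp only [hcomp]
          simpa using hmul
        convert h' using 1
        simp only [pderiv_mul, pderiv_X_self, pderiv_X_of_ne (show (0:Fin 2) ≠ 1 by decide),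
          mul_one, mul_zero, map_add, add_zero, eval_add, eval_mul, eval_X,
          Matrix.cons_val_zero, Matrix.cons_val_one, Matrix.head_cons]
        module
      · have hvi : HasFDerivAt (fun s => (![f s, g s] (1:Fin 2) : ℝ)) g' t := by simpa using hg
        have hmul := hp.fun_mul hvi
        have h' : HasFDerivAt (fun s => eval ![f s, g s] (p * X (1:Fin 2)))
            ((eval ![f t, g t] p) • g'
              + (g t) • (eval ![f t, g t] (pderiv (0:Fin 2) p) • f'
                  + eval ![f t, g t] (pderiv (1:Fin 2) p) • g')) t := by
          simp only [hcomp]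
          simpa using hmul
        convert h' using 1
        simp only [pderiv_mul, pderiv_X_self, pderiv_X_of_ne (show (1:Fin 2) ≠ 0 by decide),
          mul_one, mul_zero, map_add, add_zero, eval_add, eval_mul, eval_X,
          Matrix.cons_val_zero, Matrix.cons_val_one, Matrix.head_cons]
        module

/-- Implicit differentiation of the critical-point equation in direction `Pi.single k 1`. -/
lemma key_deriv {m : ℕ} {Ω : Set (Fin (m+1) → ℝ)} (hΩ : IsOpen Ω)
    {u₁ u₂ : (Fin (m+1) → ℝ) → ℝ}
    (hu₁ : ContDiffOn ℝ (⊤ : ℕ∞) u₁ Ω) (hu₂ : ContDiffOn ℝ (⊤ : ℕ∞) u₂ Ω)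
    (Q : ℕ → MvPolynomial (Fin 2) ℝ)
    (h0 : ∀ s ∈ Ω, ∑ j : Fin (m+1), s j * eval ![u₁ s, u₂ s] (Q (j.1+1)) = 0)
    {t : Fin (m+1) → ℝ} (ht : t ∈ Ω) (k : Fin (m+1)) :
    eval ![u₁ t, u₂ t] (Q (k.1+1))
      + (∑ j : Fin (m+1), t j * eval ![u₁ t, u₂ t] (pderiv (0:Fin 2) (Q (j.1+1)))) *
          fderiv ℝ u₁ t (Pi.single k 1)
      + (∑ j : Fin (m+1), t j * eval ![u₁ t, u₂ t] (pderiv (1:Fin 2) (Q (j.1+1)))) *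
          fderiv ℝ u₂ t (Pi.single k 1) = 0 := by
  have htn : Ω ∈ nhds t := hΩ.mem_nhds ht
  have hf : HasFDerivAt u₁ (fderiv ℝ u₁ t) t :=
    ((hu₁.contDiffAt htn).differentiableAt (by simp)).hasFDerivAt
  have hg : HasFDerivAt u₂ (fderiv ℝ u₂ t) t :=
    ((hu₂.contDiffAt htn).differentiableAt (by simp)).hasFDerivAt
  set f' := fderiv ℝ u₁ t with hf'
  set g' := fderiv ℝ u₂ t with hg'
  have hG : HasFDerivAt (fun s => ∑ j : Fin (m+1), s j * eval ![u₁ s, u₂ s] (Q (j.1+1)))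
      (∑ j : Fin (m+1),
        ((t j) • (eval ![u₁ t, u₂ t] (pderiv (0:Fin 2) (Q (j.1+1))) • f'
              + eval ![u₁ t, u₂ t] (pderiv (1:Fin 2) (Q (j.1+1))) • g')
          + (eval ![u₁ t, u₂ t] (Q (j.1+1))) •
              (ContinuousLinearMap.proj j : ((Fin (m+1) → ℝ) →L[ℝ] ℝ)))) t := by
    apply HasFDerivAt.fun_sum
    intro j _
    have hproj : HasFDerivAt (fun s : Fin (m+1) → ℝ => s j)
        (ContinuousLinearMap.proj j : ((Fin (m+1) → ℝ) →L[ℝ] ℝ)) t := by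
      exact (ContinuousLinearMap.proj (R := ℝ) (φ := fun _ : Fin (m+1) => ℝ) j).hasFDerivAt
    exact hproj.mul (hasFDerivAt_eval_poly _ hf hg)
  have hev : (fun s => ∑ j : Fin (m+1), s j * eval ![u₁ s, u₂ s] (Q (j.1+1)))
      =ᶠ[nhds t] (fun _ => (0:ℝ)) := Filter.eventuallyEq_of_mem htn h0
  have hzero : fderiv ℝ (fun s => ∑ j : Fin (m+1), s j * eval ![u₁ s, u₂ s] (Q (j.1+1))) t = 0 := by
    rw [hev.fderiv_eq]
    exact fderiv_const_apply 0
  have hsum0 : (∑ j : Fin (m+1),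
        ((t j) • (eval ![u₁ t, u₂ t] (pderiv (0:Fin 2) (Q (j.1+1))) • f'
              + eval ![u₁ t, u₂ t] (pderiv (1:Fin 2) (Q (j.1+1))) • g')
          + (eval ![u₁ t, u₂ t] (Q (j.1+1))) •
              (ContinuousLinearMap.proj j : ((Fin (m+1) → ℝ) →L[ℝ] ℝ)))) = 0 := by
    rw [← hG.fderiv, hzero]
  have happ := congrArg (fun L : ((Fin (m+1) → ℝ) →L[ℝ] ℝ) => L (Pi.single k 1)) hsum0
  simp only [ContinuousLinearMap.sum_apply, ContinuousLinearMap.add_apply,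
    ContinuousLinearMap.smul_apply, ContinuousLinearMap.proj_apply,
    ContinuousLinearMap.zero_apply, smul_eq_mul, Pi.single_apply] at happ
  rw [Finset.sum_add_distrib] at happ
  have hc : ∑ j : Fin (m+1),
      eval ![u₁ t, u₂ t] (Q (j.1+1)) * (if j = k then (1:ℝ) else 0)
      = eval ![u₁ t, u₂ t] (Q (k.1+1)) := by
    simp [mul_ite, Finset.sum_ite_eq']
  rw [hc] at happ
  have hsplit : ∑ j : Fin (m+1),
      t j * (eval ![u₁ t, u₂ t] (pderiv (0:Fin 2) (Q (j.1+1))) * f' (Pi.single k 1)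
        + eval ![u₁ t, u₂ t] (pderiv (1:Fin 2) (Q (j.1+1))) * g' (Pi.single k 1))
      = (∑ j : Fin (m+1), t j * eval ![u₁ t, u₂ t] (pderiv (0:Fin 2) (Q (j.1+1)))) *
          f' (Pi.single k 1)
        + (∑ j : Fin (m+1), t j * eval ![u₁ t, u₂ t] (pderiv (1:Fin 2) (Q (j.1+1)))) *
          g' (Pi.single k 1) := by
    rw [Finset.sum_mul, Finset.sum_mul, ← Finset.sum_add_distrib]
    exact Finset.sum_congr rfl fun j _ => by ring
  rw [hsplit] at happ
  linarith

/-- dynamics of a critical point `(u₁,u₂)` of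
`Φ₁(t;x,y) = Σ_{k=0}^m t_k F^{k+1}₁(x,y)`: each component is a Riemann
invariant, `∂u₁/∂t_k = λ₁ᵏ ∂u₁/∂t₀`, `∂u₂/∂t_k = λ₂ᵏ ∂u₂/∂t₀` with
`λ₁ᵏ = (1/ε) ∂F^{k+1}₁/∂x` and `λ₂ᵏ = F^k₁` at `(u₁,u₂)`; in particular for
`k = 1` the speeds are `(1+ε)u₁ + u₂` and `ε u₁ + u₂`. -/
theorem confluent_hydrodynamic_Gr25_case1 (ε : ℝ) (hε : ε ≠ 0)
    (m : ℕ) (hm : 2 ≤ m)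
    (Ω : Set (Fin (m + 1) → ℝ)) (hΩ : IsOpen Ω)
    (u₁ u₂ : (Fin (m + 1) → ℝ) → ℝ)
    (hu₁ : ContDiffOn ℝ (⊤ : ℕ∞) u₁ Ω) (hu₂ : ContDiffOn ℝ (⊤ : ℕ∞) u₂ Ω)
    (hcx : ∀ t ∈ Ω, ∑ k : Fin (m + 1),
      t k * eval ![u₁ t, u₂ t] (pderiv (0 : Fin 2) (F1 ε (k.1 + 1))) = 0)
    (hcy : ∀ t ∈ Ω, ∑ k : Fin (m + 1),
      t k * eval ![u₁ t, u₂ t] (pderiv (1 : Fin 2) (F1 ε (k.1 + 1))) = 0)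
    (hne : ∀ t ∈ Ω, u₁ t ≠ 0)
    (hxx : ∀ t ∈ Ω, ∑ k : Fin (m + 1),
      t k * eval ![u₁ t, u₂ t]
        (pderiv (0 : Fin 2) (pderiv (0 : Fin 2) (F1 ε (k.1 + 1)))) ≠ 0)
    (hyy : ∀ t ∈ Ω, ∑ k : Fin (m + 1),
      t k * eval ![u₁ t, u₂ t]
        (pderiv (1 : Fin 2) (pderiv (1 : Fin 2) (F1 ε (k.1 + 1)))) ≠ 0) :
    ∀ t ∈ Ω,
      (∀ k : Fin (m + 1), k ≠ 0 →
        fderiv ℝ u₁ t (Pi.single k 1)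
            = (1 / ε) * eval ![u₁ t, u₂ t] (pderiv (0 : Fin 2) (F1 ε (k.1 + 1))) *
                fderiv ℝ u₁ t (Pi.single 0 1)
        ∧ fderiv ℝ u₂ t (Pi.single k 1)
            = eval ![u₁ t, u₂ t] (F1 ε k.1) * fderiv ℝ u₂ t (Pi.single 0 1))
      ∧ fderiv ℝ u₁ t (Pi.single 1 1)
          = ((1 + ε) * u₁ t + u₂ t) * fderiv ℝ u₁ t (Pi.single 0 1)
      ∧ fderiv ℝ u₂ t (Pi.single 1 1)
          = (ε * u₁ t + u₂ t) * fderiv ℝ u₂ t (Pi.single 0 1) := by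
  obtain ⟨m', rfl⟩ : ∃ m', m = m' + 2 := ⟨m - 2, by omega⟩
  intro t ht
  set U : Fin 2 → ℝ := ![u₁ t, u₂ t] with hU
  set A : ℝ := ∑ j : Fin (m' + 2 + 1), t j * eval U
      (pderiv (0:Fin 2) (pderiv (0:Fin 2) (F1 ε (j.1+1)))) with hA
  set B : ℝ := ∑ j : Fin (m' + 2 + 1), t j * eval U
      (pderiv (1:Fin 2) (pderiv (1:Fin 2) (F1 ε (j.1+1)))) with hB
  set M : ℝ := ∑ j : Fin (m' + 2 + 1), t j * eval U
      (pderiv (1:Fin 2) (pderiv (0:Fin 2) (F1 ε (j.1+1)))) with hM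
  have hAne : A ≠ 0 := hxx t ht
  have hBne : B ≠ 0 := hyy t ht
  -- the mixed second derivative vanishes
  have hM0 : M = 0 := by
    have h1 : u₁ t * M
        = (∑ j : Fin (m' + 2 + 1), t j * eval U (pderiv (0:Fin 2) (F1 ε (j.1+1))))
          - ε * ∑ j : Fin (m' + 2 + 1), t j * eval U (pderiv (1:Fin 2) (F1 ε (j.1+1))) := by
      rw [hM, Finset.mul_sum, Finset.mul_sum, ← Finset.sum_sub_distrib]
      refine Finset.sum_congr rfl fun j _ => ?_
      have he := congrArg (eval U) (epd_F1 ε j.1)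
      simp only [eval_mul, eval_X, eval_sub, eval_C, hU, Matrix.cons_val_zero] at he
      simp only [hU]
      linear_combination t j * he
    have h2 : u₁ t * M = 0 := by rw [h1, hcx t ht, hcy t ht]; ring
    exact (mul_eq_zero.mp h2).resolve_left (hne t ht)
  -- x-equations
  have Ex : ∀ k : Fin (m' + 2 + 1),
      eval U (pderiv (0:Fin 2) (F1 ε (k.1+1))) + A * fderiv ℝ u₁ t (Pi.single k 1) = 0 := by
    intro k
    have h := key_deriv hΩ hu₁ hu₂ (fun n => pderiv (0:Fin 2) (F1 ε n)) hcx ht k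
    simp only [← hU] at h
    rw [← hA, ← hM, hM0] at h
    linarith
  -- y-equations
  have Ey : ∀ k : Fin (m' + 2 + 1),
      eval U (F1 ε k.1) + B * fderiv ℝ u₂ t (Pi.single k 1) = 0 := by
    intro k
    have h := key_deriv hΩ hu₁ hu₂ (fun n => pderiv (1:Fin 2) (F1 ε n)) hcy ht k
    simp only [← hU] at h
    have hcomm : (∑ j : Fin (m' + 2 + 1), t j * eval U
          (pderiv (0:Fin 2) (pderiv (1:Fin 2) (F1 ε (j.1+1))))) = M := by
      rw [hM]
      exact Finset.sum_congr rfl fun j _ => by rw [pderiv_comm_F1]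
    rw [hcomm, hM0, ← hB, pderiv1_F1] at h
    linarith
  -- base equations at k = 0
  have hx0 : ε + A * fderiv ℝ u₁ t (Pi.single 0 1) = 0 := by
    have h := Ex 0
    rw [show ((0 : Fin (m' + 2 + 1)).1) = 0 from rfl] at h
    rw [pderiv0_F1, G1_zero, eval_C] at h
    exact h
  have hy0 : 1 + B * fderiv ℝ u₂ t (Pi.single 0 1) = 0 := by
    have h := Ey 0
    rw [show ((0 : Fin (m' + 2 + 1)).1) = 0 from rfl] at h
    rw [F1_zero, map_one] at h
    exact h
  -- solved form
  have claim1 : ∀ k : Fin (m' + 2 + 1),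
      fderiv ℝ u₁ t (Pi.single k 1)
        = (1/ε) * eval U (pderiv (0:Fin 2) (F1 ε (k.1+1))) * fderiv ℝ u₁ t (Pi.single 0 1) := by
    intro k
    have h1 : A * fderiv ℝ u₁ t (Pi.single k 1)
        = -(eval U (pderiv (0:Fin 2) (F1 ε (k.1+1)))) := by linarith [Ex k]
    have h0 : A * fderiv ℝ u₁ t (Pi.single 0 1) = -ε := by linarith
    apply mul_left_cancel₀ hAne
    rw [h1]
    have : A * ((1/ε) * eval U (pderiv (0:Fin 2) (F1 ε (k.1+1))) * fderiv ℝ u₁ t (Pi.single 0 1))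
        = (1/ε) * eval U (pderiv (0:Fin 2) (F1 ε (k.1+1))) * (A * fderiv ℝ u₁ t (Pi.single 0 1)) := by
      ring
    rw [this, h0]
    field_simp
  have claim2 : ∀ k : Fin (m' + 2 + 1),
      fderiv ℝ u₂ t (Pi.single k 1)
        = eval U (F1 ε k.1) * fderiv ℝ u₂ t (Pi.single 0 1) := by
    intro k
    have h1 : B * fderiv ℝ u₂ t (Pi.single k 1) = -(eval U (F1 ε k.1)) := by linarith [Ey k]
    have h0 : B * fderiv ℝ u₂ t (Pi.single 0 1) = -1 := by linarith
    apply mul_left_cancel₀ hBne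
    rw [h1]
    have : B * (eval U (F1 ε k.1) * fderiv ℝ u₂ t (Pi.single 0 1))
        = eval U (F1 ε k.1) * (B * fderiv ℝ u₂ t (Pi.single 0 1)) := by ring
    rw [this, h0]
    ring
  refine ⟨fun k _ => ⟨claim1 k, claim2 k⟩, ?_, ?_⟩
  · have h := claim1 1
    rw [show ((1 : Fin (m' + 2 + 1)).1) = 1 from rfl] at h
    have heval : eval U (pderiv (0:Fin 2) (F1 ε (1+1))) = ε * (ε+1) * u₁ t + ε * u₂ t := by
      rw [pderiv0_F1 ε 1, G1_one]
      simp [hU]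
    rw [heval] at h
    rw [h]
    field_simp
    ring
  · have h := claim2 1
    rw [show ((1 : Fin (m' + 2 + 1)).1) = 1 from rfl] at h
    have heval : eval U (F1 ε 1) = ε * u₁ t + u₂ t := by
      rw [F1_one]
      simp [hU]
    rw [heval] at h
    exact h
end

section
/- Let y_1 ∈ ℝ, y_2 > 0 and z ∈ ℝ. For δ > 0 set x_1(δ) = δ√y_2 + δ² y_1/2 and x_2(δ) = −δ√y_2 + δ² y_1/2. Then the limit lim_{δ → 0⁺} ((1 − x_1(δ) z)(1 − x_2(δ) z))^{−1/δ²} = exp(y_1 z + y_2 z²) holds; i.e., the confluence limit takes the Lauricella function (1 − x_1 z)^{−ε_1}(1 − x_2 z)^{−ε_2} with ε_1 = ε_2 = 1/δ² to the most degenerate confluent Lauricella-type function e^{y_1 z + y_2 z²}. -/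
/-- the confluence limit.  With
`x₁(δ) = δ√y₂ + δ²y₁/2`, `x₂(δ) = -δ√y₂ + δ²y₁/2` and `ε₁ = ε₂ = 1/δ²`,
`((1 - x₁(δ)z)(1 - x₂(δ)z))^{-1/δ²} → exp(y₁z + y₂z²)` as `δ → 0⁺`;
i.e. the confluence takes the Lauricella function to the most degenerate
confluent Lauricella-type function. -/
theorem confluence_limit_Airy (y₁ : ℝ) (y₂ : ℝ) (hy₂ : 0 < y₂) (z : ℝ) :
    Filter.Tendsto
      (fun δ : ℝ =>
        ((1 - (δ * Real.sqrt y₂ + δ ^ 2 * y₁ / 2) * z) *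
            (1 - (-(δ * Real.sqrt y₂) + δ ^ 2 * y₁ / 2) * z)) ^ (-(1 / δ ^ 2)))
      (nhdsWithin (0 : ℝ) (Set.Ioi 0))
      (nhds (Real.exp (y₁ * z + y₂ * z ^ 2))) := by
  set C : ℝ := y₁ * z + y₂ * z ^ 2 with hC
  set D : ℝ := (y₁ * z / 2) ^ 2 with hD
  have hsq : Real.sqrt y₂ ^ 2 = y₂ := Real.sq_sqrt hy₂.le
  have hf : ∀ δ : ℝ,
      (1 - (δ * Real.sqrt y₂ + δ ^ 2 * y₁ / 2) * z) *
        (1 - (-(δ * Real.sqrt y₂) + δ ^ 2 * y₁ / 2) * z)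
      = 1 - δ ^ 2 * C + δ ^ 4 * D := by
    intro δ
    rw [hC, hD]
    linear_combination (-(δ ^ 2 * z ^ 2)) * hsq
  -- derivative of g t = log (1 - t C + t² D) at 0 is -C
  have hpoly : HasDerivAt (fun t : ℝ => 1 - t * C + t ^ 2 * D) (-C) 0 := by
    have h := (((hasDerivAt_id (0 : ℝ)).mul_const C).const_sub 1).add
      ((hasDerivAt_pow 2 (0 : ℝ)).mul_const D)
    exact h.congr_deriv (by simp)
  have hlog : HasDerivAt (fun t : ℝ => Real.log (1 - t * C + t ^ 2 * D)) (-C) 0 := by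
    have := hpoly.log (by norm_num)
    simpa using this
  have hslope := hasDerivAt_iff_tendsto_slope.mp hlog
  -- δ ↦ δ² tends to 0 within {0}ᶜ
  have hsq2 : Filter.Tendsto (fun δ : ℝ => δ ^ 2) (nhdsWithin 0 (Set.Ioi 0))
      (nhdsWithin 0 {(0 : ℝ)}ᶜ) := by
    apply tendsto_nhdsWithin_of_tendsto_nhds_of_eventually_within
    · have : Filter.Tendsto (fun δ : ℝ => δ ^ 2) (nhds 0) (nhds ((0 : ℝ) ^ 2)) :=
        (continuous_pow 2).tendsto 0
      simpa using this.mono_left nhdsWithin_le_nhds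
    · filter_upwards [self_mem_nhdsWithin] with δ (hδ : (0 : ℝ) < δ)
      exact pow_ne_zero 2 (ne_of_gt hδ)
  have hexp : Filter.Tendsto
      (fun δ : ℝ => Real.log (1 - δ ^ 2 * C + δ ^ 4 * D) * (-(1 / δ ^ 2)))
      (nhdsWithin 0 (Set.Ioi 0)) (nhds C) := by
    have hcomp := (hslope.comp hsq2).neg
    have heq : ∀ δ : ℝ, δ ≠ 0 →
        -(slope (fun t : ℝ => Real.log (1 - t * C + t ^ 2 * D)) 0 (δ ^ 2))
        = Real.log (1 - δ ^ 2 * C + δ ^ 4 * D) * (-(1 / δ ^ 2)) := by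
      intro δ hδ
      have h2 : (δ ^ 2 : ℝ) ≠ 0 := pow_ne_zero 2 hδ
      have h4 : (δ ^ 2 : ℝ) ^ 2 = δ ^ 4 := by ring
      simp only [slope_def_field, div_eq_mul_inv]
      rw [h4]
      field_simp
      rw [show (1 - C * 0 + D * 0 ^ 2 : ℝ) = 1 by ring, Real.log_one]
      ring
    have hcomp' : Filter.Tendsto
        (fun δ : ℝ => -(slope (fun t : ℝ => Real.log (1 - t * C + t ^ 2 * D)) 0 (δ ^ 2)))
        (nhdsWithin 0 (Set.Ioi 0)) (nhds C) := by simpa using hcomp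
    refine hcomp'.congr' ?_
    filter_upwards [self_mem_nhdsWithin] with δ (hδ : (0 : ℝ) < δ)
    exact heq δ (ne_of_gt hδ)
  -- eventual positivity
  have hcont : ContinuousAt (fun δ : ℝ => 1 - δ ^ 2 * C + δ ^ 4 * D) 0 := by fun_prop
  have hpos : ∀ᶠ δ in nhdsWithin (0 : ℝ) (Set.Ioi 0),
      0 < 1 - δ ^ 2 * C + δ ^ 4 * D := by
    have h1 : (0 : ℝ) < 1 - (0 : ℝ) ^ 2 * C + (0 : ℝ) ^ 4 * D := by norm_num
    exact (hcont.eventually (eventually_gt_nhds h1)).filter_mono nhdsWithin_le_nhds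
  have hfinal : Filter.Tendsto
      (fun δ : ℝ => Real.exp (Real.log (1 - δ ^ 2 * C + δ ^ 4 * D) * (-(1 / δ ^ 2))))
      (nhdsWithin 0 (Set.Ioi 0)) (nhds (Real.exp C)) :=
    (Real.continuous_exp.continuousAt.tendsto).comp hexp
  refine hfinal.congr' ?_
  filter_upwards [hpos] with δ hδ
  rw [hf δ, Real.rpow_def_of_pos hδ]
end

section
/- Fix an integer m ≥ 2 and let p_k denote the elementary Schur polynomials in two variables (y_1, y_2). Define Φ₃(t; y_1, y_2) = Σ_{k=0}^m t_k p_{k+1}(y_1, y_2). Let (u_1, u_2) : Ω → ℝ² be a smooth map on an open set Ω ⊂ ℝ^{m+1} such that for every t ∈ Ω: (i) Σ_{k=0}^m t_k p_k(u_1(t), u_2(t)) = 0 and Σ_{k=1}^m t_k p_{k−1}(u_1(t), u_2(t)) = 0 (the critical equations of Φ₃), and (ii) Σ_{k=2}^m t_k p_{k−2}(u_1(t), u_2(t)) ≠ 0. Then for every k ∈ {1, …, m}: ∂u_1/∂t_k = p_k(u) ∂u_1/∂t_0 + p_{k−1}(u) ∂u_2/∂t_0 and ∂u_2/∂t_k =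 p_k(u) ∂u_2/∂t_0, where u = (u_1(t), u_2(t)); i.e., the coefficient matrix is the 2×2 upper-triangular matrix with diagonal entries p_k(u) and off-diagonal entry p_{k−1}(u), so the system is non-diagonalizable and (u_1, u_2) are not Riemann invariants. -/
open MvPolynomial

/-- The elementary Schur polynomials in `n` variables, with `p_k = 0` for `k < 0`. -/
noncomputable def schurP (n : ℕ) (k : ℤ) : MvPolynomial (Fin n) ℝ :=
  if k < 0 then 0
  else
    ∑ d ∈ Finset.filter
        (fun d : Fin n → ℕ => ∑ i, (i.1 + 1) * d i = k.toNat)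
        (Fintype.piFinset fun _ => Finset.range (k.toNat + 1)),
      C (∏ i, ((Nat.factorial (d i) : ℝ))⁻¹) *
        ∏ i, (X i : MvPolynomial (Fin n) ℝ) ^ d i

/-- `p_k` evaluated at a point of `ℝⁿ`. -/
noncomputable def schurPf (n : ℕ) (k : ℤ) (y : Fin n → ℝ) : ℝ :=
  eval y (schurP n k)

lemma coeff_pderiv {n : ℕ} (i : Fin n) (f : MvPolynomial (Fin n) ℝ) (mo : Fin n →₀ ℕ) :
    coeff mo (pderiv i f) = ((mo i : ℝ) + 1) * coeff (mo + Finsupp.single i 1) f := by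
  induction f using MvPolynomial.induction_on' with
  | monomial s a =>
    rw [pderiv_monomial, coeff_monomial, coeff_monomial]
    by_cases h : s = mo + Finsupp.single i 1
    · have h1 : s - Finsupp.single i 1 = mo := by
        subst h; ext j; simp [Finsupp.single_apply]
      have h2 : s i = mo i + 1 := by subst h; simp
      simp [h, h1, h2]; ring
    · rw [if_neg h, mul_zero]
      by_cases h1 : s - Finsupp.single i 1 = mo
      · rw [if_pos h1]
        rcases Nat.eq_zero_or_pos (s i) with h2 | h2
        · simp [h2]
        · exfalso; apply h
          have : Finsupp.single i 1 ≤ s := by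
            rw [Finsupp.single_le_iff]; omega
          rw [← h1, tsub_add_cancel_of_le this]
      · rw [if_neg h1]
  | add p q hp hq => simp [hp, hq]; ring

lemma coeff_schurP {n : ℕ} (k : ℤ) (mo : Fin n →₀ ℕ) :
    coeff mo (schurP n k) =
      if 0 ≤ k ∧ ∑ i, (i.1 + 1) * mo i = k.toNat then
        ∏ i, ((Nat.factorial (mo i) : ℝ))⁻¹ else 0 := by
  rw [schurP]
  by_cases hk : k < 0
  · rw [if_pos hk, if_neg (fun h => absurd h.1 (not_le.mpr hk))]
    simp
  · rw [if_neg hk]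
    have hmono : ∀ d : Fin n → ℕ, (∏ i, (X i : MvPolynomial (Fin n) ℝ) ^ d i)
        = monomial (Finsupp.equivFunOnFinite.symm d) 1 := by
      intro d
      rw [← prod_X_pow_eq_monomial]
      apply (Finset.prod_subset (Finset.subset_univ _) _).symm
      intro x _ hx
      have : d x = 0 := by
        by_contra h
        exact hx (by simpa [Finsupp.equivFunOnFinite] using h)
      simp [Finsupp.equivFunOnFinite, this]
    rw [coeff_sum]
    simp only [hmono, coeff_C_mul, coeff_monomial]
    have hsymm : Finsupp.equivFunOnFinite.symm (⇑mo) = mo :=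
      Finsupp.equivFunOnFinite.symm_apply_apply mo
    have hterm : ∀ d : Fin n → ℕ,
        ((∏ i, ((Nat.factorial (d i) : ℝ))⁻¹) *
          if Finsupp.equivFunOnFinite.symm d = mo then 1 else 0)
        = if d = ⇑mo then ∏ i, ((Nat.factorial (d i) : ℝ))⁻¹ else 0 := by
      intro d
      by_cases h : d = ⇑mo
      · rw [if_pos h, if_pos (by rw [h, hsymm]), mul_one]
      · rw [if_neg h, if_neg, mul_zero]
        intro hh
        exact h (by rw [← hh]; rfl)
    simp only [mul_ite, mul_one, mul_zero] at hterm ⊢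
    rw [Finset.sum_congr rfl (fun d _ => hterm d), Finset.sum_ite_eq']
    by_cases hc : ∑ i, (i.1 + 1) * mo i = k.toNat
    · rw [if_pos, if_pos ⟨not_lt.mp hk, hc⟩]
      rw [Finset.mem_filter]
      refine ⟨?_, hc⟩
      rw [Fintype.mem_piFinset]
      intro i
      rw [Finset.mem_range]
      have : (i.1 + 1) * mo i ≤ k.toNat := hc ▸ Finset.single_le_sum
        (f := fun j : Fin n => (j.1 + 1) * mo j) (fun _ _ => Nat.zero_le _)
        (Finset.mem_univ i)
      nlinarith [this]
    · have hnotmem : (⇑mo : Fin n → ℕ) ∉ Finset.filter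
          (fun d : Fin n → ℕ => ∑ i, (i.1 + 1) * d i = k.toNat)
          (Fintype.piFinset fun _ => Finset.range (k.toNat + 1)) :=
        fun hmem => hc (Finset.mem_filter.mp hmem).2
      rw [if_neg hnotmem, if_neg (fun h => hc h.2)]

lemma pderiv_schurP {n : ℕ} (i : Fin n) (k : ℤ) :
    pderiv i (schurP n k) = schurP n (k - (i.1 + 1)) := by
  ext mo
  rw [coeff_pderiv, coeff_schurP, coeff_schurP]
  have hsum : ∑ j : Fin n, (j.1 + 1) * ((mo + Finsupp.single i 1 : Fin n →₀ ℕ) j)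
      = (∑ j : Fin n, (j.1 + 1) * mo j) + (i.1 + 1) := by
    simp only [Finsupp.add_apply, Nat.mul_add, Finset.sum_add_distrib]
    congr 1
    rw [Finset.sum_eq_single i]
    · simp
    · intro j _ hj
      rw [Finsupp.single_apply, if_neg (fun e => hj e.symm), mul_zero]
    · intro h; exact absurd (Finset.mem_univ i) h
  by_cases h : 0 ≤ k ∧ (∑ j : Fin n, (j.1 + 1) * mo j) + (i.1 + 1) = k.toNat
  · rw [if_pos (by rw [hsum]; exact h),
      if_pos (by obtain ⟨h1, h2⟩ := h; constructor <;> omega)]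
    rw [Finset.prod_eq_mul_prod_sdiff_singleton_of_mem (Finset.mem_univ i),
      Finset.prod_eq_mul_prod_sdiff_singleton_of_mem (Finset.mem_univ i)
        (fun j => ((Nat.factorial (mo j) : ℝ))⁻¹)]
    have hoff : ∀ j ∈ (Finset.univ : Finset (Fin n)) \ {i},
        ((Nat.factorial (((mo + Finsupp.single i 1 : Fin n →₀ ℕ) j)) : ℝ))⁻¹
          = ((Nat.factorial (mo j) : ℝ))⁻¹ := by
      intro j hj
      have hj' : j ≠ i := by simpa using (Finset.mem_sdiff.mp hj).2
      rw [Finsupp.add_apply, Finsupp.single_apply, if_neg (fun e => hj' e.symm),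
        add_zero]
    rw [Finset.prod_congr rfl hoff]
    have hii : ((mo + Finsupp.single i 1 : Fin n →₀ ℕ) i) = mo i + 1 := by simp
    rw [hii, Nat.factorial_succ]
    have h0 : ((Nat.factorial (mo i) : ℝ)) ≠ 0 :=
      Nat.cast_ne_zero.mpr (Nat.factorial_ne_zero _)
    have h1 : ((mo i : ℝ) + 1) ≠ 0 := by positivity
    push_cast
    rw [mul_inv]
    field_simp
  · rw [if_neg (by rw [hsum]; exact h),
      if_neg (by intro ⟨h1, h2⟩; exact h ⟨by omega, by omega⟩), mul_zero]

lemma schurP_neg {n : ℕ} {k : ℤ} (hk : k < 0) : schurP n k = 0 := by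
  rw [schurP, if_pos hk]

lemma schurP_zero (n : ℕ) : schurP n 0 = 1 := by
  ext mo
  rw [coeff_schurP, MvPolynomial.coeff_one]
  by_cases h : mo = 0
  · subst h; simp
  · have hA : ¬((0:ℤ) ≤ 0 ∧ ∑ i, (i.1 + 1) * mo i = (0:ℤ).toNat) := by
      rintro ⟨-, h2⟩
      apply h
      ext j
      have h3 := (by simpa using h2 : ∀ i, mo i = 0) j
      simpa using h3
    rw [if_neg hA, if_neg (fun e => h e.symm)]

lemma hasFDerivAt_eval {n : ℕ} (p : MvPolynomial (Fin n) ℝ) (y : Fin n → ℝ) :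
    HasFDerivAt (fun z : Fin n → ℝ => eval z p)
      (∑ i, eval y (pderiv i p) • (ContinuousLinearMap.proj i : (Fin n → ℝ) →L[ℝ] ℝ)) y := by
  induction p using MvPolynomial.induction_on with
  | C a =>
      have : (∑ i, eval y (pderiv i (C a : MvPolynomial (Fin n) ℝ)) •
          (ContinuousLinearMap.proj i : (Fin n → ℝ) →L[ℝ] ℝ)) = 0 := by
        simp [pderiv_C]
      rw [this]
      simpa using hasFDerivAt_const a y
  | add p q hp hq =>
      have h := hp.add hq
      simp only [map_add]
      refine h.congr_fderiv (Eq.symm ?_)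
      simp [add_smul, Finset.sum_add_distrib]
  | mul_X p i hp =>
      have hxi : HasFDerivAt (fun z : Fin n → ℝ => z i)
          (ContinuousLinearMap.proj i : (Fin n → ℝ) →L[ℝ] ℝ) y := by
        have h := (ContinuousLinearMap.proj (R := ℝ) (φ := fun _ : Fin n => ℝ) i).hasFDerivAt (x := y)
        exact h
      have h := hp.mul hxi
      simp only [map_mul, eval_X]
      refine h.congr_fderiv (Eq.symm ?_)
      ext v
      simp only [pderiv_mul, ContinuousLinearMap.sum_apply, ContinuousLinearMap.smul_apply,
        ContinuousLinearMap.proj_apply, ContinuousLinearMap.add_apply, map_add, map_mul,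
        eval_X, smul_eq_mul, Finset.sum_add_distrib, pderiv_X]
      simp only [Pi.single_apply, apply_ite (MvPolynomial.eval y), map_one, map_zero,
        mul_ite, mul_one, mul_zero, ite_mul, zero_mul, add_mul,
        Finset.sum_add_distrib, Finset.sum_ite_eq,
        Finset.mem_univ, if_true, Finset.mul_sum]
      rw [add_comm]
      congr 1
      apply Finset.sum_congr rfl
      intros
      ring

lemma key_s12 {E : Type*} [NormedAddCommGroup E] [NormedSpace ℝ E]
    (p : MvPolynomial (Fin 2) ℝ) {f₁ f₂ : E → ℝ} {t : E} {D₁ D₂ : E →L[ℝ] ℝ}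
    (h₁ : HasFDerivAt f₁ D₁ t) (h₂ : HasFDerivAt f₂ D₂ t) :
    HasFDerivAt (fun s => eval ![f₁ s, f₂ s] p)
      (eval ![f₁ t, f₂ t] (pderiv 0 p) • D₁ + eval ![f₁ t, f₂ t] (pderiv 1 p) • D₂) t := by
  have hF : HasFDerivAt (fun s => (![f₁ s, f₂ s] : Fin 2 → ℝ))
      (ContinuousLinearMap.pi ![D₁, D₂]) t := by
    rw [hasFDerivAt_pi']
    intro i
    fin_cases i
    · simpa [ContinuousLinearMap.proj_pi] using h₁
    · simpa [ContinuousLinearMap.proj_pi] using h₂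
  have h := (hasFDerivAt_eval p ![f₁ t, f₂ t]).comp t hF
  refine h.congr_fderiv ?_
  ext v
  simp [Fin.sum_univ_two, ContinuousLinearMap.proj_pi]

lemma crit_deriv {m : ℕ} {Ω : Set (Fin (m + 1) → ℝ)} (hΩ : IsOpen Ω)
    {u₁ u₂ : (Fin (m + 1) → ℝ) → ℝ} {t : Fin (m + 1) → ℝ} (ht : t ∈ Ω)
    {D₁ D₂ : (Fin (m + 1) → ℝ) →L[ℝ] ℝ}
    (hd₁ : HasFDerivAt u₁ D₁ t) (hd₂ : HasFDerivAt u₂ D₂ t) (c : ℤ)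
    (hvan : ∀ s ∈ Ω, ∑ k : Fin (m + 1), s k * schurPf 2 ((k.1 : ℤ) + c) ![u₁ s, u₂ s] = 0)
    (v : Fin (m + 1) → ℝ) :
    (∑ k : Fin (m + 1), v k * schurPf 2 ((k.1 : ℤ) + c) ![u₁ t, u₂ t])
      + (∑ k : Fin (m + 1), t k * schurPf 2 ((k.1 : ℤ) + c - 1) ![u₁ t, u₂ t]) * D₁ v
      + (∑ k : Fin (m + 1), t k * schurPf 2 ((k.1 : ℤ) + c - 2) ![u₁ t, u₂ t]) * D₂ v
      = 0 := by
  have hterm : ∀ k : Fin (m + 1), HasFDerivAt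
      (fun s => s k * schurPf 2 ((k.1 : ℤ) + c) ![u₁ s, u₂ s])
      (t k • (schurPf 2 ((k.1 : ℤ) + c - 1) ![u₁ t, u₂ t] • D₁
          + schurPf 2 ((k.1 : ℤ) + c - 2) ![u₁ t, u₂ t] • D₂)
        + schurPf 2 ((k.1 : ℤ) + c) ![u₁ t, u₂ t] •
            (ContinuousLinearMap.proj k : (Fin (m + 1) → ℝ) →L[ℝ] ℝ)) t := by
    intro k
    have hk : HasFDerivAt (fun s : Fin (m + 1) → ℝ => s k)
        (ContinuousLinearMap.proj k : (Fin (m + 1) → ℝ) →L[ℝ] ℝ) t := by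
      have h := (ContinuousLinearMap.proj (R := ℝ) (φ := fun _ : Fin (m + 1) => ℝ)
        k).hasFDerivAt (x := t)
      exact h
    have hkey := key_s12 (schurP 2 ((k.1 : ℤ) + c)) hd₁ hd₂
    rw [pderiv_schurP, pderiv_schurP] at hkey
    have h01 : ((k.1 : ℤ) + c - (((0 : Fin 2).1 : ℤ) + 1)) = (k.1 : ℤ) + c - 1 := by
      norm_num
    have h02 : ((k.1 : ℤ) + c - (((1 : Fin 2).1 : ℤ) + 1)) = (k.1 : ℤ) + c - 2 := by
      norm_num
    rw [h01, h02] at hkey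
    exact hk.mul hkey
  have hF := HasFDerivAt.fun_sum (fun k (_ : k ∈ Finset.univ) => hterm k)
  have heq : (fun s => ∑ k : Fin (m + 1), s k * schurPf 2 ((k.1 : ℤ) + c) ![u₁ s, u₂ s])
      =ᶠ[nhds t] fun _ => (0 : ℝ) :=
    Filter.eventuallyEq_of_mem (hΩ.mem_nhds ht) hvan
  have h0 := (hF.congr_of_eventuallyEq heq.symm).unique (hasFDerivAt_const (0 : ℝ) t)
  have hv := congrArg (fun L : (Fin (m + 1) → ℝ) →L[ℝ] ℝ => L v) h0
  simp only [ContinuousLinearMap.sum_apply, ContinuousLinearMap.add_apply,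
    ContinuousLinearMap.smul_apply, ContinuousLinearMap.proj_apply,
    ContinuousLinearMap.zero_apply, smul_eq_mul] at hv
  rw [Finset.sum_mul, Finset.sum_mul, ← Finset.sum_add_distrib, ← Finset.sum_add_distrib,
    ← hv]
  apply Finset.sum_congr rfl
  intros
  ring

lemma schurPf_zero (n : ℕ) (y : Fin n → ℝ) : schurPf n 0 y = 1 := by
  rw [schurPf, schurP_zero]; simp

lemma schurPf_neg {n : ℕ} {k : ℤ} (hk : k < 0) (y : Fin n → ℝ) : schurPf n k y = 0 := by
  rw [schurPf, schurP_neg hk]; simp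

/-- the critical point `(u₁,u₂)` of
`Φ₃(t;y₁,y₂) = Σ_{k=0}^m t_k p_{k+1}(y₁,y₂)` satisfies the non-diagonalizable
hydrodynamic type hierarchy `∂u₁/∂t_k = p_k(u) ∂u₁/∂t₀ + p_{k-1}(u) ∂u₂/∂t₀`,
`∂u₂/∂t_k = p_k(u) ∂u₂/∂t₀`, whose coefficient matrix is a 2×2 upper-triangular
Jordan-type block (so `(u₁,u₂)` are not Riemann invariants). -/
theorem confluent_hydrodynamic_Gr25_most_degenerate (m : ℕ) (hm : 2 ≤ m)
    (Ω : Set (Fin (m + 1) → ℝ)) (hΩ : IsOpen Ω)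
    (u₁ u₂ : (Fin (m + 1) → ℝ) → ℝ)
    (hu₁ : ContDiffOn ℝ (⊤ : ℕ∞) u₁ Ω) (hu₂ : ContDiffOn ℝ (⊤ : ℕ∞) u₂ Ω)
    (hcrit₁ : ∀ t ∈ Ω,
      ∑ k : Fin (m + 1), t k * schurPf 2 (k.1 : ℤ) ![u₁ t, u₂ t] = 0)
    (hcrit₂ : ∀ t ∈ Ω,
      ∑ k : Fin (m + 1), t k * schurPf 2 ((k.1 : ℤ) - 1) ![u₁ t, u₂ t] = 0)
    (hnd : ∀ t ∈ Ω,
      ∑ k : Fin (m + 1), t k * schurPf 2 ((k.1 : ℤ) - 2) ![u₁ t, u₂ t] ≠ 0) :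
    ∀ t ∈ Ω, ∀ k : Fin (m + 1), k ≠ 0 →
      (fderiv ℝ u₁ t (Pi.single k 1)
          = schurPf 2 (k.1 : ℤ) ![u₁ t, u₂ t] * fderiv ℝ u₁ t (Pi.single 0 1)
            + schurPf 2 ((k.1 : ℤ) - 1) ![u₁ t, u₂ t] * fderiv ℝ u₂ t (Pi.single 0 1))
      ∧ fderiv ℝ u₂ t (Pi.single k 1)
          = schurPf 2 (k.1 : ℤ) ![u₁ t, u₂ t] * fderiv ℝ u₂ t (Pi.single 0 1) := by
  intro t ht k hk
  have hmem := hΩ.mem_nhds ht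
  have hd₁ : HasFDerivAt u₁ (fderiv ℝ u₁ t) t :=
    ((hu₁.contDiffAt hmem).differentiableAt (by simp)).hasFDerivAt
  have hd₂ : HasFDerivAt u₂ (fderiv ℝ u₂ t) t :=
    ((hu₂.contDiffAt hmem).differentiableAt (by simp)).hasFDerivAt
  have hvanA : ∀ s ∈ Ω,
      ∑ j : Fin (m + 1), s j * schurPf 2 ((j.1 : ℤ) + 0) ![u₁ s, u₂ s] = 0 := by
    intro s hs; simpa using hcrit₁ s hs
  have hvanB : ∀ s ∈ Ω,
      ∑ j : Fin (m + 1), s j * schurPf 2 ((j.1 : ℤ) + (-1)) ![u₁ s, u₂ s] = 0 := by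
    intro s hs
    simpa only [← sub_eq_add_neg] using hcrit₂ s hs
  have hsingle : ∀ (j : Fin (m + 1)) (c : ℤ),
      ∑ i : Fin (m + 1), (Pi.single j 1 : Fin (m + 1) → ℝ) i *
        schurPf 2 ((i.1 : ℤ) + c) ![u₁ t, u₂ t]
      = schurPf 2 ((j.1 : ℤ) + c) ![u₁ t, u₂ t] := by
    intro j c
    rw [Finset.sum_eq_single j]
    · simp
    · intro b _ hb; rw [Pi.single_eq_of_ne hb, zero_mul]
    · intro h; exact absurd (Finset.mem_univ j) h
  have E1k := crit_deriv hΩ ht hd₁ hd₂ 0 hvanA (Pi.single k 1)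
  have E10 := crit_deriv hΩ ht hd₁ hd₂ 0 hvanA (Pi.single 0 1)
  have E2k := crit_deriv hΩ ht hd₁ hd₂ (-1) hvanB (Pi.single k 1)
  have E20 := crit_deriv hΩ ht hd₁ hd₂ (-1) hvanB (Pi.single 0 1)
  rw [hsingle] at E1k E10 E2k E20
  simp only [add_zero, ← sub_eq_add_neg, sub_sub, Fin.val_zero, Nat.cast_zero,
    zero_sub] at E1k E10 E2k E20
  norm_num [schurPf_zero, schurPf_neg] at E1k E10 E2k E20
  have hA := hcrit₂ t ht
  rw [hA, zero_mul, add_zero] at E1k E10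
  have hB := hnd t ht
  set B := ∑ x : Fin (m + 1), t x * schurPf 2 ((x.1 : ℤ) - 2) ![u₁ t, u₂ t] with hBdef
  set Cc := ∑ x : Fin (m + 1), t x * schurPf 2 ((x.1 : ℤ) - 3) ![u₁ t, u₂ t] with hCdef
  set Pk := schurPf 2 (k.1 : ℤ) ![u₁ t, u₂ t] with hPk
  set Pk1 := schurPf 2 ((k.1 : ℤ) - 1) ![u₁ t, u₂ t] with hPk1
  constructor
  · apply mul_left_cancel₀ (mul_ne_zero hB hB)
    linear_combination B * E2k - Cc * E1k - B * Pk * E20 + (Pk * Cc - B * Pk1) * E10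
  · apply mul_left_cancel₀ hB
    linear_combination E1k - Pk * E10
end

section
/- Fix z ∈ ℂ and a complex constant ε. On the open set of (x, y_1, y_2) ∈ ℂ³ such that 1 − xz does not lie in the nonpositive real axis, define η(x, y_1, y_2) = (1 − xz)^{−ε} exp(y_1 z + y_2 z²) using the principal branch of the complex power. Then η satisfies the three equations: (i) ∂η/∂y_2 = ∂²η/∂y_1², (ii) x · ∂²η/∂x∂y_1 = ∂η/∂x − ε ∂η/∂y_1, and (iii) x² · ∂²η/∂x∂y_2 = ∂η/∂x − ε ∂η/∂y_1 − ε x ∂η/∂y_2. -/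
-- derivative of w ↦ exp (w*z + c)
private lemma dexp1 (z c w : ℂ) :
    HasDerivAt (fun v : ℂ => Complex.exp (v * z + c)) (Complex.exp (w * z + c) * z) w := by
  have h := (((hasDerivAt_id w).mul_const z).add_const c).cexp
  simpa using h

-- derivative of w ↦ exp (c + w*z²)
private lemma dexp2 (z c w : ℂ) :
    HasDerivAt (fun v : ℂ => Complex.exp (c + v * z ^ 2))
      (Complex.exp (c + w * z ^ 2) * z ^ 2) w := by
  have h := (((hasDerivAt_id w).mul_const (z ^ 2)).const_add c).cexp
  simpa using h

private lemma dpow (z ε x : ℂ) (hx : (1 - x * z) ∈ Complex.slitPlane) :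
    HasDerivAt (fun v : ℂ => (1 - v * z) ^ (-ε))
      (ε * z * (1 - x * z) ^ (-ε - 1)) x := by
  have h1 : HasDerivAt (fun v : ℂ => 1 - v * z) (-(1 * z)) x :=
    ((hasDerivAt_id x).mul_const z).const_sub 1
  have h := h1.cpow_const (c := -ε) hx
  convert h using 1
  ring

/-- the confluent Lauricella-type function on Gr(2,6),
`η(x,y₁,y₂) = (1 - xz)^{-ε} exp(y₁z + y₂z²)` (principal branch),
satisfies, wherever `1 - xz` lies in the slit plane,
(i) `∂η/∂y₂ = ∂²η/∂y₁²`,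
(ii) `x ∂²η/∂x∂y₁ = ∂η/∂x - ε ∂η/∂y₁`,
(iii) `x² ∂²η/∂x∂y₂ = ∂η/∂x - ε ∂η/∂y₁ - ε x ∂η/∂y₂`. -/
theorem confluent_system_Gr26 (z ε : ℂ) (η : ℂ → ℂ → ℂ → ℂ)
    (hη : ∀ x y₁ y₂ : ℂ,
      η x y₁ y₂ = (1 - x * z) ^ (-ε) * Complex.exp (y₁ * z + y₂ * z ^ 2))
    (x y₁ y₂ : ℂ) (hx : (1 - x * z) ∈ Complex.slitPlane) :
    (deriv (fun w => η x y₁ w) y₂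
        = deriv (fun w => deriv (fun v => η x v y₂) w) y₁)
    ∧ (x * deriv (fun w => deriv (fun v => η v w y₂) x) y₁
        = deriv (fun v => η v y₁ y₂) x - ε * deriv (fun w => η x w y₂) y₁)
    ∧ (x ^ 2 * deriv (fun w => deriv (fun v => η v y₁ w) x) y₂
        = deriv (fun v => η v y₁ y₂) x - ε * deriv (fun w => η x w y₂) y₁
          - ε * x * deriv (fun w => η x y₁ w) y₂) := by
  have hne : (1 - x * z) ≠ 0 := Complex.slitPlane_ne_zero hx
  set A : ℂ := (1 - x * z) ^ (-ε) with hA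
  set B : ℂ := (1 - x * z) ^ (-ε - 1) with hB
  have hAB : A = B * (1 - x * z) := by
    have h := Complex.cpow_add (-ε - 1) 1 hne
    rw [Complex.cpow_one] at h
    rw [hA, hB, ← h]
    congr 1
    ring
  set E : ℂ := Complex.exp (y₁ * z + y₂ * z ^ 2) with hE
  -- ∂η/∂y₂
  have h2 : deriv (fun w => η x y₁ w) y₂ = A * (E * z ^ 2) := by
    have : (fun w => η x y₁ w) = fun w => A * Complex.exp (y₁ * z + w * z ^ 2) := by
      funext w; rw [hη]
    rw [this]
    exact ((dexp2 z (y₁ * z) y₂).const_mul A).deriv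
  -- ∂η/∂y₁
  have h1 : deriv (fun w => η x w y₂) y₁ = A * (E * z) := by
    have : (fun w => η x w y₂) = fun w => A * Complex.exp (w * z + y₂ * z ^ 2) := by
      funext w; rw [hη]
    rw [this]
    exact ((dexp1 z (y₂ * z ^ 2) y₁).const_mul A).deriv
  -- ∂η/∂x
  have hdx : deriv (fun v => η v y₁ y₂) x = ε * z * B * E := by
    have : (fun v => η v y₁ y₂) = fun v => (1 - v * z) ^ (-ε) * E := by
      funext v; rw [hη]
    rw [this]
    exact ((dpow z ε x hx).mul_const E).deriv
  -- inner x-derivatives for mixed terms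
  have hin1 : ∀ w, deriv (fun v => η v w y₂) x
      = ε * z * B * Complex.exp (w * z + y₂ * z ^ 2) := by
    intro w
    have : (fun v => η v w y₂) = fun v => (1 - v * z) ^ (-ε) * Complex.exp (w * z + y₂ * z ^ 2) := by
      funext v; rw [hη]
    rw [this]
    exact ((dpow z ε x hx).mul_const _).deriv
  have hin2 : ∀ w, deriv (fun v => η v y₁ w) x
      = ε * z * B * Complex.exp (y₁ * z + w * z ^ 2) := by
    intro w
    have : (fun v => η v y₁ w) = fun v => (1 - v * z) ^ (-ε) * Complex.exp (y₁ * z + w * z ^ 2) := by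
      funext v; rw [hη]
    rw [this]
    exact ((dpow z ε x hx).mul_const _).deriv
  have hin3 : ∀ w, deriv (fun v => η x v y₂) w
      = A * (Complex.exp (w * z + y₂ * z ^ 2) * z) := by
    intro w
    have : (fun v => η x v y₂) = fun v => A * Complex.exp (v * z + y₂ * z ^ 2) := by
      funext v; rw [hη]
    rw [this]
    exact ((dexp1 z (y₂ * z ^ 2) w).const_mul A).deriv
  -- mixed derivatives
  have hm1 : deriv (fun w => deriv (fun v => η v w y₂) x) y₁ = ε * z * B * (E * z) := by
    have : (fun w => deriv (fun v => η v w y₂) x)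
        = fun w => (ε * z * B) * Complex.exp (w * z + y₂ * z ^ 2) := by
      funext w; exact hin1 w
    rw [this]
    have := ((dexp1 z (y₂ * z ^ 2) y₁).const_mul (ε * z * B)).deriv
    rw [this]
  have hm2 : deriv (fun w => deriv (fun v => η v y₁ w) x) y₂ = ε * z * B * (E * z ^ 2) := by
    have : (fun w => deriv (fun v => η v y₁ w) x)
        = fun w => (ε * z * B) * Complex.exp (y₁ * z + w * z ^ 2) := by
      funext w; exact hin2 w
    rw [this]
    have := ((dexp2 z (y₁ * z) y₂).const_mul (ε * z * B)).deriv
    rw [this]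
  have hm3 : deriv (fun w => deriv (fun v => η x v y₂) w) y₁ = A * (E * z ^ 2) := by
    have : (fun w => deriv (fun v => η x v y₂) w)
        = fun w => (A * z) * Complex.exp (w * z + y₂ * z ^ 2) := by
      funext w; rw [hin3 w]; ring
    rw [this]
    have := ((dexp1 z (y₂ * z ^ 2) y₁).const_mul (A * z)).deriv
    rw [this]; ring
  refine ⟨by rw [h2, hm3], ?_, ?_⟩
  · rw [hm1, hdx, h1, hAB]; ring
  · rw [hm2, hdx, h1, h2, hAB]; ring
end

section
/- Fix a nonzero real constant ε, an integer m ≥ 2, and define Φ(t; x, y_1, y_2) = Σ_{k=0}^m t_k F^{k+1}(x, y_1, y_2), where F^k(x, y_1, y_2) = Σ_{j=0}^k p_{k−j}(y_1, y_2) q_j(x) with q_j(x) = ((ε)_j/j!) x^j. Let (u, v_1, v_2) : Ω → ℝ³ be a smooth map on an open set Ω ⊂ ℝ^{m+1} such that for every t ∈ Ω: (i) the critical equations hold: Σ_{j=0}^m t_j F^j = 0, Σ_{j=1}^m t_j F^{j−1} = 0, and Σ_{j=2}^m t_j Σ_{l=2}^j F^{j−l} u^{l−2} = 0, where F^j is evaluated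 at (u(t), v_1(t), v_2(t)); (ii) u(t) ≠ 0; and (iii) Φ_{0,0} := ∂²Φ/∂x² and Φ_{1,2} := ∂²Φ/∂y_1∂y_2 are nonzero at (t; u(t), v_1(t), v_2(t)). Then for every k ∈ {1, …, m}: ∂u/∂t_k = G^k ∂u/∂t_0, ∂v_1/∂t_k = F^k ∂v_1/∂t_0 + F^{k−1} ∂v_2/∂t_0, and ∂v_2/∂t_k = F^k ∂v_2/∂t_0, where G^k = Σ_{j=0}^k F^{k−j} u^j and all F's are evaluated at (u(t), v_1(t), v_2(t)); i.e., the coefficient matrix is block diagonal with a 1×1 block G^k and a 2×2 upper-triangular Jordan-type block. -/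
open MvPolynomial

/-- The two-variable elementary Schur polynomials `p_k(y₁,y₂)`, realized in
`ℝ[x,y₁,y₂]` (`X 0 = x`, `X 1 = y₁`, `X 2 = y₂`), with `p_k = 0` for `k < 0`. -/
noncomputable def pXY (k : ℤ) : MvPolynomial (Fin 3) ℝ :=
  if k < 0 then 0
  else
    ∑ d ∈ Finset.filter (fun d : ℕ × ℕ => d.1 + 2 * d.2 = k.toNat)
        (Finset.range (k.toNat + 1) ×ˢ Finset.range (k.toNat + 1)),
      C (((Nat.factorial d.1 : ℝ) * (Nat.factorial d.2 : ℝ))⁻¹) *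
        X 1 ^ d.1 * X 2 ^ d.2

/-- `q_j(x) = ((ε)_j / j!) x^j`. -/
noncomputable def qX (ε : ℝ) (j : ℕ) : MvPolynomial (Fin 3) ℝ :=
  C ((ascPochhammer ℝ j).eval ε / (Nat.factorial j : ℝ)) * X 0 ^ j

/-- `F^k(x,y₁,y₂) = Σ_{j=0}^k p_{k-j}(y₁,y₂) q_j(x)`, with `F^k = 0` for `k < 0`. -/
noncomputable def FGr26 (ε : ℝ) (k : ℤ) : MvPolynomial (Fin 3) ℝ :=
  if k < 0 then 0
  else ∑ j ∈ Finset.range (k.toNat + 1), pXY (k - j) * qX ε j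

/-- `F^k` as a function of `(x,y₁,y₂) ∈ ℝ³`. -/
noncomputable def FGr26f (ε : ℝ) (k : ℤ) (x y₁ y₂ : ℝ) : ℝ :=
  eval ![x, y₁, y₂] (FGr26 ε k)

lemma pXY_neg {k : ℤ} (hk : k < 0) : pXY k = 0 := if_pos hk

lemma pderiv0_pXY (k : ℤ) : pderiv (0 : Fin 3) (pXY k) = 0 := by
  unfold pXY
  split
  · simp
  · rw [map_sum]
    refine Finset.sum_eq_zero fun d _ => ?_
    rw [pderiv_mul, pderiv_mul]
    rw [pderiv_pow, pderiv_pow, pderiv_X_of_ne (by decide), pderiv_X_of_ne (by decide)]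
    simp

lemma pderiv1_qX (ε : ℝ) (j : ℕ) : pderiv (1 : Fin 3) (qX ε j) = 0 := by
  unfold qX
  rw [pderiv_mul, pderiv_pow, pderiv_X_of_ne (by decide)]
  simp

lemma pderiv2_qX (ε : ℝ) (j : ℕ) : pderiv (2 : Fin 3) (qX ε j) = 0 := by
  unfold qX
  rw [pderiv_mul, pderiv_pow, pderiv_X_of_ne (by decide)]
  simp

lemma pXY_zero : pXY 0 = 1 := by
  unfold pXY
  rw [if_neg (by norm_num)]
  rw [show ((0:ℤ).toNat) = 0 from rfl]
  rw [show Finset.filter (fun d : ℕ × ℕ => d.1 + 2 * d.2 = 0) (Finset.range 1 ×ˢ Finset.range 1)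
      = {(0,0)} by decide]
  simp

lemma pderiv1_pXY (k : ℤ) : pderiv (1 : Fin 3) (pXY k) = pXY (k - 1) := by
  rcases lt_or_ge k 0 with hk | hk
  · rw [pXY_neg hk, pXY_neg (by omega), map_zero]
  obtain ⟨n, rfl⟩ := Int.eq_ofNat_of_zero_le hk
  rcases n with _ | a
  · rw [show ((0:ℕ):ℤ) = 0 by simp, pXY_zero, pXY_neg (by norm_num)]; simp
  rw [show ((a + 1 : ℕ) : ℤ) - 1 = ((a:ℕ) : ℤ) by push_cast; ring]
  unfold pXY
  rw [if_neg (by omega), if_neg (by omega), map_sum]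
  have htoNat : ((a + 1 : ℕ) : ℤ).toNat = a + 1 := by simp
  have htoNat2 : ((a : ℕ) : ℤ).toNat = a := by simp
  rw [htoNat, htoNat2]
  rw [← Finset.sum_filter_of_ne (p := fun d : ℕ × ℕ => d.1 ≠ 0)
    (f := fun d => pderiv (1 : Fin 3)
      (C (((Nat.factorial d.1 : ℝ) * (Nat.factorial d.2 : ℝ))⁻¹) * X 1 ^ d.1 * X 2 ^ d.2))
    (by
      intro d _ hne hd0
      apply hne
      beta_reduce
      rw [pderiv_mul, pderiv_mul, pderiv_C, pderiv_pow, pderiv_pow,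
        pderiv_X_self, pderiv_X_of_ne (by decide), hd0]
      simp)]
  refine Finset.sum_nbij' (fun d => (d.1 - 1, d.2)) (fun e => (e.1 + 1, e.2)) ?_ ?_ ?_ ?_ ?_
  · intro d hd
    simp only [Finset.mem_filter, Finset.mem_product, Finset.mem_range] at hd ⊢
    omega
  · intro e he
    simp only [Finset.mem_filter, Finset.mem_product, Finset.mem_range] at he ⊢
    omega
  · intro d hd
    simp only [Finset.mem_filter, Finset.mem_product, Finset.mem_range] at hd
    have : 1 ≤ d.1 := by omega
    ext <;> simp <;> omega
  · intro e he; ext <;> simp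
  · intro d hd
    simp only [Finset.mem_filter, Finset.mem_product, Finset.mem_range] at hd
    obtain ⟨⟨-, hsum⟩, hne⟩ := hd
    obtain ⟨d1, d2⟩ := d
    simp only at hsum hne ⊢
    obtain ⟨c, rfl⟩ : ∃ c, d1 = c + 1 := ⟨d1 - 1, by omega⟩
    rw [pderiv_mul, pderiv_mul, pderiv_C, pderiv_pow, pderiv_X_self,
      pderiv_pow, pderiv_X_of_ne (by decide)]
    simp only [zero_mul, mul_one, zero_add, add_zero, mul_zero, Nat.add_sub_cancel]
    rw [show ((c + 1 : ℕ) : MvPolynomial (Fin 3) ℝ) = C ((c + 1 : ℕ) : ℝ) by push_cast; simp]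
    have hc : ((c + 1 : ℕ) : ℝ) * (((c+1).factorial : ℝ) * (d2.factorial : ℝ))⁻¹
        = ((c.factorial : ℝ) * (d2.factorial : ℝ))⁻¹ := by
      rw [Nat.factorial_succ]
      have h1 : ((c.factorial : ℝ)) ≠ 0 := by positivity
      have h2 : ((d2.factorial : ℝ)) ≠ 0 := by positivity
      push_cast
      field_simp
    rw [← hc, map_mul]
    ring

lemma pXY_one : pXY 1 = X 1 := by
  unfold pXY
  rw [if_neg (by norm_num)]
  rw [show ((1:ℤ).toNat) = 1 from rfl]
  rw [show Finset.filter (fun d : ℕ × ℕ => d.1 + 2 * d.2 = 1) (Finset.range 2 ×ˢ Finset.range 2)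
      = {(1,0)} by decide]
  simp [Nat.factorial]

lemma pderiv2_pXY (k : ℤ) : pderiv (2 : Fin 3) (pXY k) = pXY (k - 2) := by
  rcases lt_or_ge k 0 with hk | hk
  · rw [pXY_neg hk, pXY_neg (by omega), map_zero]
  obtain ⟨n, rfl⟩ := Int.eq_ofNat_of_zero_le hk
  match n with
  | 0 => rw [show ((0:ℕ):ℤ) = 0 by simp, pXY_zero, pXY_neg (by norm_num)]; simp
  | 1 =>
    rw [show ((1:ℕ):ℤ) = 1 by simp, pXY_one, pXY_neg (by norm_num)]
    rw [pderiv_X_of_ne (by decide)]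
  | (a + 2) =>
  rw [show ((a + 2 : ℕ) : ℤ) - 2 = ((a:ℕ) : ℤ) by push_cast; ring]
  unfold pXY
  rw [if_neg (by omega), if_neg (by omega), map_sum]
  rw [show ((a + 2 : ℕ) : ℤ).toNat = a + 2 by omega, show ((a : ℕ) : ℤ).toNat = a by omega]
  rw [← Finset.sum_filter_of_ne (p := fun d : ℕ × ℕ => d.2 ≠ 0)
    (f := fun d => pderiv (2 : Fin 3)
      (C (((Nat.factorial d.1 : ℝ) * (Nat.factorial d.2 : ℝ))⁻¹) * X 1 ^ d.1 * X 2 ^ d.2))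
    (by
      intro d _ hne hd0
      apply hne
      beta_reduce
      rw [pderiv_mul, pderiv_mul, pderiv_C, pderiv_pow, pderiv_pow,
        pderiv_X_of_ne (by decide), pderiv_X_self, hd0]
      simp)]
  refine Finset.sum_nbij' (fun d => (d.1, d.2 - 1)) (fun e => (e.1, e.2 + 1)) ?_ ?_ ?_ ?_ ?_
  · intro d hd
    simp only [Finset.mem_filter, Finset.mem_product, Finset.mem_range] at hd ⊢
    omega
  · intro e he
    simp only [Finset.mem_filter, Finset.mem_product, Finset.mem_range] at he ⊢
    omega
  · intro d hd
    simp only [Finset.mem_filter, Finset.mem_product, Finset.mem_range] at hd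
    have : 1 ≤ d.2 := by omega
    ext
    · simp
    · simp; omega
  · intro e he; ext <;> simp
  · intro d hd
    simp only [Finset.mem_filter, Finset.mem_product, Finset.mem_range] at hd
    obtain ⟨⟨-, hsum⟩, hne⟩ := hd
    obtain ⟨d1, d2⟩ := d
    simp only at hsum hne ⊢
    obtain ⟨c, rfl⟩ : ∃ c, d2 = c + 1 := ⟨d2 - 1, by omega⟩
    rw [pderiv_mul, pderiv_mul, pderiv_C, pderiv_pow, pderiv_X_of_ne (by decide),
      pderiv_pow, pderiv_X_self]
    simp only [zero_mul, mul_one, zero_add, add_zero, mul_zero, Nat.add_sub_cancel]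
    rw [show ((c + 1 : ℕ) : MvPolynomial (Fin 3) ℝ) = C ((c + 1 : ℕ) : ℝ) by push_cast; simp]
    have hc : ((c + 1 : ℕ) : ℝ) * ((d1.factorial : ℝ) * ((c+1).factorial : ℝ))⁻¹
        = ((d1.factorial : ℝ) * (c.factorial : ℝ))⁻¹ := by
      rw [Nat.factorial_succ]
      have h1 : ((c.factorial : ℝ)) ≠ 0 := by positivity
      have h2 : ((d1.factorial : ℝ)) ≠ 0 := by positivity
      push_cast
      field_simp
    rw [← hc, map_mul]
    ring

lemma poch_sum (ε : ℝ) (j : ℕ) :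
    ε * ∑ i ∈ Finset.range j, (ascPochhammer ℝ i).eval ε / (Nat.factorial i : ℝ)
      = (ascPochhammer ℝ j).eval ε * j / (Nat.factorial j : ℝ) := by
  induction j with
  | zero => simp
  | succ n ih =>
    rw [Finset.sum_range_succ, mul_add, ih, ascPochhammer_succ_right]
    have h1 : ((n.factorial : ℝ)) ≠ 0 := by positivity
    have h2 : (((n+1).factorial : ℝ)) ≠ 0 := by positivity
    rw [Nat.factorial_succ]
    simp only [Polynomial.eval_mul, Polynomial.eval_add, Polynomial.eval_X,
      Polynomial.eval_natCast]
    push_cast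
    field_simp
    ring

lemma pderiv0_qX (ε : ℝ) (j : ℕ) :
    pderiv (0 : Fin 3) (qX ε j)
      = C ε * ∑ n ∈ Finset.range j, qX ε (j - 1 - n) * X 0 ^ n := by
  cases j with
  | zero => simp [qX]
  | succ jj =>
    unfold qX
    rw [pderiv_mul, pderiv_C, pderiv_pow, pderiv_X_self]
    have hterm : ∀ n ∈ Finset.range (jj + 1),
        C ((ascPochhammer ℝ (jj + 1 - 1 - n)).eval ε / (Nat.factorial (jj + 1 - 1 - n) : ℝ)) *
          X (0 : Fin 3) ^ (jj + 1 - 1 - n) * X 0 ^ n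
        = C ((ascPochhammer ℝ (jj - n)).eval ε / (Nat.factorial (jj - n) : ℝ)) * X 0 ^ jj := by
      intro n hn
      simp only [Finset.mem_range] at hn
      rw [show jj + 1 - 1 - n = jj - n by omega, mul_assoc, ← pow_add,
        show jj - n + n = jj by omega]
    rw [Finset.sum_congr rfl hterm, ← Finset.sum_mul, ← map_sum]
    rw [show ∑ n ∈ Finset.range (jj + 1),
          (ascPochhammer ℝ (jj - n)).eval ε / (Nat.factorial (jj - n) : ℝ)
        = ∑ i ∈ Finset.range (jj + 1),
          (ascPochhammer ℝ i).eval ε / (Nat.factorial i : ℝ) by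
      rw [← Finset.sum_range_reflect]
      exact Finset.sum_congr rfl fun i hi => by
        simp only [Finset.mem_range] at hi
        rw [show jj - (jj + 1 - 1 - i) = i by omega]]
    simp only [zero_mul, zero_add, mul_one, show jj + 1 - 1 = jj from rfl]
    rw [show ((jj + 1 : ℕ) : MvPolynomial (Fin 3) ℝ) = C ((jj + 1 : ℕ) : ℝ) by push_cast; simp]
    rw [← mul_assoc, ← mul_assoc, ← map_mul, ← map_mul]
    congr 1
    rw [poch_sum ε (jj + 1)]
    push_cast
    ring

lemma FGr26_neg {ε : ℝ} {k : ℤ} (hk : k < 0) : FGr26 ε k = 0 := if_pos hk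

lemma FGr26_nat (ε : ℝ) (n : ℕ) :
    FGr26 ε (n : ℤ) = ∑ j ∈ Finset.range (n + 1), pXY ((n : ℤ) - j) * qX ε j := by
  unfold FGr26
  rw [if_neg (by omega), show ((n : ℤ)).toNat = n by omega]

lemma FGr26_zero (ε : ℝ) : FGr26 ε 0 = 1 := by
  have := FGr26_nat ε 0
  norm_num at this
  rw [this, pXY_zero]
  unfold qX
  simp

lemma pd1_F (ε : ℝ) (k : ℤ) : pderiv (1 : Fin 3) (FGr26 ε k) = FGr26 ε (k - 1) := by
  rcases lt_or_ge k 0 with hk | hk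
  · rw [FGr26_neg hk, FGr26_neg (by omega), map_zero]
  obtain ⟨n, rfl⟩ := Int.eq_ofNat_of_zero_le hk
  rw [FGr26_nat, map_sum]
  have hterm : ∀ j ∈ Finset.range (n + 1),
      pderiv (1 : Fin 3) (pXY ((n : ℤ) - j) * qX ε j) = pXY ((n : ℤ) - j - 1) * qX ε j := by
    intro j _
    rw [pderiv_mul, pderiv1_qX, pderiv1_pXY, mul_zero, add_zero]
  rw [Finset.sum_congr rfl hterm]
  cases n with
  | zero => simp [pXY_neg, FGr26_neg]
  | succ a =>
    rw [Finset.sum_range_succ, show ((a+1:ℕ):ℤ) - (a+1 : ℕ) - 1 = -1 by push_cast; ring,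
      pXY_neg (by norm_num), zero_mul, add_zero,
      show ((a+1:ℕ):ℤ) - 1 = ((a:ℕ):ℤ) by push_cast; ring, FGr26_nat]
    refine Finset.sum_congr rfl fun j _ => ?_
    congr 1
    push_cast
    ring

lemma pd2_F (ε : ℝ) (k : ℤ) : pderiv (2 : Fin 3) (FGr26 ε k) = FGr26 ε (k - 2) := by
  rcases lt_or_ge k 0 with hk | hk
  · rw [FGr26_neg hk, FGr26_neg (by omega), map_zero]
  obtain ⟨n, rfl⟩ := Int.eq_ofNat_of_zero_le hk
  rw [FGr26_nat, map_sum]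
  have hterm : ∀ j ∈ Finset.range (n + 1),
      pderiv (2 : Fin 3) (pXY ((n : ℤ) - j) * qX ε j) = pXY ((n : ℤ) - j - 2) * qX ε j := by
    intro j _
    rw [pderiv_mul, pderiv2_qX, pderiv2_pXY, mul_zero, add_zero]
  rw [Finset.sum_congr rfl hterm]
  match n with
  | 0 => simp [pXY_neg, FGr26_neg]
  | 1 =>
    rw [show ((1:ℕ):ℤ) - 2 = -1 by norm_num, FGr26_neg (by norm_num)]
    refine Finset.sum_eq_zero fun j hj => ?_
    simp only [Finset.mem_range] at hj
    rw [pXY_neg (by omega), zero_mul]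
  | (a + 2) =>
    have h1 : pXY (((a+2:ℕ):ℤ) - ((a+2 : ℕ):ℤ) - 2) = 0 := pXY_neg (by push_cast; omega)
    have h2 : pXY (((a+2:ℕ):ℤ) - ((a+1 : ℕ):ℤ) - 2) = 0 := pXY_neg (by push_cast; omega)
    rw [Finset.sum_range_succ, Finset.sum_range_succ, h1, zero_mul, add_zero,
      h2, zero_mul, add_zero,
      show ((a+2:ℕ):ℤ) - 2 = ((a:ℕ):ℤ) by push_cast; ring, FGr26_nat]
    refine Finset.sum_congr rfl fun j _ => ?_
    congr 1
    push_cast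
    ring

lemma pd0_F (ε : ℝ) (k : ℕ) :
    pderiv (0 : Fin 3) (FGr26 ε (k : ℤ))
      = C ε * ∑ n ∈ Finset.range k, FGr26 ε ((k : ℤ) - 1 - n) * X 0 ^ n := by
  rw [FGr26_nat, map_sum]
  have hterm : ∀ j ∈ Finset.range (k + 1),
      pderiv (0 : Fin 3) (pXY ((k : ℤ) - j) * qX ε j)
        = ∑ n ∈ Finset.range j, C ε * (pXY ((k : ℤ) - j) * qX ε (j - 1 - n) * X 0 ^ n) := by
    intro j _
    rw [pderiv_mul, pderiv0_pXY, zero_mul, zero_add, pderiv0_qX, Finset.mul_sum,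
      Finset.mul_sum]
    exact Finset.sum_congr rfl fun n _ => by ring
  rw [Finset.sum_congr rfl hterm, Finset.mul_sum]
  rw [Finset.sum_comm' (t' := Finset.range k)
    (s' := fun n => Finset.Ico (n + 1) (k + 1))
    (by intro j n; simp only [Finset.mem_range, Finset.mem_Ico]; omega)]
  refine Finset.sum_congr rfl fun n hn => ?_
  simp only [Finset.mem_range] at hn
  rw [Finset.sum_Ico_eq_sum_range]
  rw [show k + 1 - (n + 1) = k - n by omega]
  have hF : FGr26 ε ((k : ℤ) - 1 - n) = ∑ i ∈ Finset.range (k - n),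
      pXY ((k : ℤ) - 1 - n - i) * qX ε i := by
    have h1 : ((k : ℤ) - 1 - n) = ((k - 1 - n : ℕ) : ℤ) := by push_cast [hn]; omega
    rw [h1, FGr26_nat, show k - 1 - n + 1 = k - n by omega]
  rw [hF, Finset.sum_mul, Finset.mul_sum]
  refine Finset.sum_congr rfl fun i hi => ?_
  simp only [Finset.mem_range] at hi
  rw [show n + 1 + i - 1 - n = i by omega,
    show ((k : ℤ) - (n + 1 + i : ℕ)) = ((k : ℤ) - 1 - n - i) by push_cast; ring]

lemma hasFDerivAt_eval3 {E : Type*} [NormedAddCommGroup E] [NormedSpace ℝ E]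
    (P : MvPolynomial (Fin 3) ℝ) {f g h : E → ℝ} {t : E} {f' g' h' : E →L[ℝ] ℝ}
    (hf : HasFDerivAt f f' t) (hg : HasFDerivAt g g' t) (hh : HasFDerivAt h h' t) :
    HasFDerivAt (fun s => eval ![f s, g s, h s] P)
      (eval ![f t, g t, h t] (pderiv 0 P) • f' + eval ![f t, g t, h t] (pderiv 1 P) • g'
        + eval ![f t, g t, h t] (pderiv 2 P) • h') t := by
  induction P using MvPolynomial.induction_on with
  | C c =>
    simp only [eval_C, pderiv_C, map_zero, zero_smul, add_zero]
    exact hasFDerivAt_const c t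
  | add p q hp hq =>
    have := hp.add hq
    have hfun : (fun s => eval ![f s, g s, h s] (p + q))
        = fun s => eval ![f s, g s, h s] p + eval ![f s, g s, h s] q := by funext s; simp
    rw [hfun]
    refine this.congr_fderiv ?_
    simp only [map_add, add_smul]; abel
  | mul_X p n hp =>
    have hfn : ∀ i : Fin 3, (fun s => eval ![f s, g s, h s] (p * X i))
        = fun s => eval ![f s, g s, h s] p * (![f s, g s, h s] i) := by
      intro i; funext s; simp
    fin_cases n
    · rw [show (⟨0, by omega⟩ : Fin 3) = 0 from rfl, hfn 0]
      refine (hp.mul hf).congr_fderiv ?_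
      simp only [pderiv_mul, pderiv_X_self,
        pderiv_X_of_ne (show (0:Fin 3) ≠ 1 by decide),
        pderiv_X_of_ne (show (0:Fin 3) ≠ 2 by decide),
        map_add, map_mul, eval_X, Matrix.cons_val_zero, mul_one, mul_zero, add_zero]
      module
    · rw [show (⟨1, by omega⟩ : Fin 3) = 1 from rfl, hfn 1]
      refine (hp.mul hg).congr_fderiv ?_
      simp only [pderiv_mul, pderiv_X_self,
        pderiv_X_of_ne (show (1:Fin 3) ≠ 0 by decide),
        pderiv_X_of_ne (show (1:Fin 3) ≠ 2 by decide),
        map_add, map_mul, eval_X, Matrix.cons_val_one, Matrix.head_cons, Matrix.cons_val_zero, mul_one, mul_zero,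
        add_zero, zero_add]
      module
    · rw [show (⟨2, by omega⟩ : Fin 3) = 2 from rfl, hfn 2]
      refine (hp.mul hh).congr_fderiv ?_
      have h2 : eval ![f t, g t, h t] (X (2 : Fin 3)) = h t := by simp
      simp only [pderiv_mul, pderiv_X_self,
        pderiv_X_of_ne (show (2:Fin 3) ≠ 0 by decide),
        pderiv_X_of_ne (show (2:Fin 3) ≠ 1 by decide),
        map_add, map_mul, eval_X, mul_one, mul_zero, add_zero, zero_add, h2]
      module

lemma key_lin {m : ℕ} {Ω : Set (Fin (m+1) → ℝ)} (hΩ : IsOpen Ω)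
    {u v₁ v₂ : (Fin (m+1) → ℝ) → ℝ}
    (hu : ContDiffOn ℝ (⊤ : ℕ∞) u Ω) (hv₁ : ContDiffOn ℝ (⊤ : ℕ∞) v₁ Ω) (hv₂ : ContDiffOn ℝ (⊤ : ℕ∞) v₂ Ω)
    (Q : Fin (m+1) → MvPolynomial (Fin 3) ℝ)
    (hQ : ∀ s ∈ Ω, ∑ j : Fin (m+1), s j * eval ![u s, v₁ s, v₂ s] (Q j) = 0)
    {t : Fin (m+1) → ℝ} (ht : t ∈ Ω) (k : Fin (m+1)) :
    eval ![u t, v₁ t, v₂ t] (Q k)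
      + (∑ j : Fin (m+1), t j * eval ![u t, v₁ t, v₂ t] (pderiv 0 (Q j)))
          * fderiv ℝ u t (Pi.single k 1)
      + (∑ j : Fin (m+1), t j * eval ![u t, v₁ t, v₂ t] (pderiv 1 (Q j)))
          * fderiv ℝ v₁ t (Pi.single k 1)
      + (∑ j : Fin (m+1), t j * eval ![u t, v₁ t, v₂ t] (pderiv 2 (Q j)))
          * fderiv ℝ v₂ t (Pi.single k 1) = 0 := by
  have hmem := hΩ.mem_nhds ht
  have hud : HasFDerivAt u (fderiv ℝ u t) t :=
    (((hu.contDiffAt hmem).differentiableAt (by simp))).hasFDerivAt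
  have hv1d : HasFDerivAt v₁ (fderiv ℝ v₁ t) t :=
    (((hv₁.contDiffAt hmem).differentiableAt (by simp))).hasFDerivAt
  have hv2d : HasFDerivAt v₂ (fderiv ℝ v₂ t) t :=
    (((hv₂.contDiffAt hmem).differentiableAt (by simp))).hasFDerivAt
  set w : Fin (m+1) → ℝ := Pi.single k 1 with hw
  set e : Fin 3 → Fin (m+1) → ℝ :=
    fun i j => eval ![u t, v₁ t, v₂ t] (pderiv i (Q j)) with he
  set Dp : Fin (m+1) → ((Fin (m+1) → ℝ) →L[ℝ] ℝ) := fun j =>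
    e 0 j • fderiv ℝ u t + e 1 j • fderiv ℝ v₁ t + e 2 j • fderiv ℝ v₂ t with hDp
  have hterm : ∀ j : Fin (m+1),
      HasFDerivAt (fun s : Fin (m+1) → ℝ => s j * eval ![u s, v₁ s, v₂ s] (Q j))
        (t j • Dp j + (eval ![u t, v₁ t, v₂ t] (Q j)) • ContinuousLinearMap.proj j) t := by
    intro j
    have h1 : HasFDerivAt (fun s : Fin (m+1) → ℝ => s j)
        (ContinuousLinearMap.proj j : (Fin (m+1) → ℝ) →L[ℝ] ℝ) t :=
      (ContinuousLinearMap.proj (R := ℝ) (φ := fun _ : Fin (m+1) => ℝ) j).hasFDerivAt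
    exact h1.mul (hasFDerivAt_eval3 (Q j) hud hv1d hv2d)
  have hH : HasFDerivAt (fun s : Fin (m+1) → ℝ =>
      ∑ j : Fin (m+1), s j * eval ![u s, v₁ s, v₂ s] (Q j))
      (∑ j : Fin (m+1),
        (t j • Dp j + (eval ![u t, v₁ t, v₂ t] (Q j)) • ContinuousLinearMap.proj j)) t :=
    HasFDerivAt.fun_sum (fun j _ => hterm j)
  have hzero : (fun s : Fin (m+1) → ℝ =>
      ∑ j : Fin (m+1), s j * eval ![u s, v₁ s, v₂ s] (Q j)) =ᶠ[nhds t] fun _ => (0:ℝ) :=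
    Filter.eventuallyEq_of_mem hmem hQ
  have hD0 : (∑ j : Fin (m+1),
      (t j • Dp j + (eval ![u t, v₁ t, v₂ t] (Q j)) • ContinuousLinearMap.proj j)) = 0 := by
    have h1 := hH.fderiv
    rw [hzero.fderiv_eq] at h1
    rw [← h1, fderiv_const_apply]
  have hsingle : ∀ j : Fin (m+1), w j = if j = k then 1 else 0 := by
    intro j; rw [hw, Pi.single_apply]
  have hsum2 : ∑ j : Fin (m+1), eval ![u t, v₁ t, v₂ t] (Q j) * w j
      = eval ![u t, v₁ t, v₂ t] (Q k) := by
    rw [Finset.sum_congr rfl fun j _ => by rw [hsingle j, mul_ite, mul_one, mul_zero]]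
    simpa using Finset.sum_ite_eq' Finset.univ k (fun j => eval ![u t, v₁ t, v₂ t] (Q j))
  have hsplit : ∑ j : Fin (m+1), t j * (Dp j) w
      = (∑ j : Fin (m+1), t j * e 0 j) * fderiv ℝ u t w
        + (∑ j : Fin (m+1), t j * e 1 j) * fderiv ℝ v₁ t w
        + (∑ j : Fin (m+1), t j * e 2 j) * fderiv ℝ v₂ t w := by
    rw [Finset.sum_mul, Finset.sum_mul, Finset.sum_mul, ← Finset.sum_add_distrib,
      ← Finset.sum_add_distrib]
    refine Finset.sum_congr rfl fun j _ => ?_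
    simp only [hDp, ContinuousLinearMap.add_apply, ContinuousLinearMap.smul_apply, smul_eq_mul]
    ring
  have happ := congrArg (fun L : (Fin (m+1) → ℝ) →L[ℝ] ℝ => L w) hD0
  simp only [ContinuousLinearMap.sum_apply, ContinuousLinearMap.add_apply,
    ContinuousLinearMap.smul_apply, ContinuousLinearMap.proj_apply,
    ContinuousLinearMap.zero_apply, smul_eq_mul] at happ
  rw [Finset.sum_add_distrib, hsum2, hsplit] at happ
  linarith [happ]

lemma FGr26f_neg {ε : ℝ} {k : ℤ} (hk : k < 0) (x y₁ y₂ : ℝ) : FGr26f ε k x y₁ y₂ = 0 := by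
  rw [FGr26f, FGr26_neg hk, map_zero]

lemma FGr26f_zero (ε : ℝ) (x y₁ y₂ : ℝ) : FGr26f ε 0 x y₁ y₂ = 1 := by
  rw [FGr26f, FGr26_zero, map_one]

lemma eval_pd1 (ε : ℝ) (k : ℤ) (x y₁ y₂ : ℝ) :
    eval ![x, y₁, y₂] (pderiv (1 : Fin 3) (FGr26 ε k)) = FGr26f ε (k - 1) x y₁ y₂ := by
  rw [pd1_F, FGr26f]

lemma eval_pd2 (ε : ℝ) (k : ℤ) (x y₁ y₂ : ℝ) :
    eval ![x, y₁, y₂] (pderiv (2 : Fin 3) (FGr26 ε k)) = FGr26f ε (k - 2) x y₁ y₂ := by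
  rw [pd2_F, FGr26f]

lemma eval_pd0 (ε : ℝ) (n : ℕ) (x y₁ y₂ : ℝ) :
    eval ![x, y₁, y₂] (pderiv (0 : Fin 3) (FGr26 ε (n : ℤ)))
      = ε * ∑ i ∈ Finset.range n, FGr26f ε ((n : ℤ) - 1 - i) x y₁ y₂ * x ^ i := by
  rw [pd0_F, map_mul, eval_C, map_sum]
  congr 1
  refine Finset.sum_congr rfl fun i _ => ?_
  rw [map_mul, map_pow, eval_X, FGr26f, Matrix.cons_val_zero]

lemma eval_pd1_pd0 (ε : ℝ) (n : ℕ) (x y₁ y₂ : ℝ) :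
    eval ![x, y₁, y₂] (pderiv (1 : Fin 3) (pderiv (0 : Fin 3) (FGr26 ε (n : ℤ))))
      = ε * ∑ i ∈ Finset.range n, FGr26f ε ((n : ℤ) - 2 - i) x y₁ y₂ * x ^ i := by
  rw [pd0_F, pderiv_C_mul, map_sum, map_mul, eval_C, map_sum]
  congr 1
  refine Finset.sum_congr rfl fun i _ => ?_
  rw [pderiv_mul, pderiv_pow, pderiv_X_of_ne (show (0:Fin 3) ≠ 1 by decide), pd1_F]
  rw [show (n : ℤ) - 1 - (i : ℤ) - 1 = (n : ℤ) - 2 - i by ring]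
  rw [mul_zero, mul_zero, add_zero, map_mul, map_pow, eval_X, FGr26f, Matrix.cons_val_zero]

lemma eval_pd2_pd0 (ε : ℝ) (n : ℕ) (x y₁ y₂ : ℝ) :
    eval ![x, y₁, y₂] (pderiv (2 : Fin 3) (pderiv (0 : Fin 3) (FGr26 ε (n : ℤ))))
      = ε * ∑ i ∈ Finset.range n, FGr26f ε ((n : ℤ) - 3 - i) x y₁ y₂ * x ^ i := by
  rw [pd0_F, pderiv_C_mul, map_sum, map_mul, eval_C, map_sum]
  congr 1
  refine Finset.sum_congr rfl fun i _ => ?_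
  rw [pderiv_mul, pderiv_pow, pderiv_X_of_ne (show (0:Fin 3) ≠ 2 by decide), pd2_F]
  rw [show (n : ℤ) - 1 - (i : ℤ) - 2 = (n : ℤ) - 3 - i by ring]
  rw [mul_zero, mul_zero, add_zero, map_mul, map_pow, eval_X, FGr26f, Matrix.cons_val_zero]

lemma ext_sum (ε : ℝ) (c : ℤ) {N M : ℕ} (h : N ≤ M) (hc : c < N) (x y₁ y₂ : ℝ) :
    ∑ i ∈ Finset.range M, FGr26f ε (c - i) x y₁ y₂ * x ^ i
      = ∑ i ∈ Finset.range N, FGr26f ε (c - i) x y₁ y₂ * x ^ i := by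
  symm
  refine Finset.sum_subset (Finset.range_subset_range.2 h) fun i _ hi => ?_
  simp only [Finset.mem_range, not_lt] at hi
  rw [FGr26f_neg (by omega), zero_mul]

lemma reindex_Icc (ε : ℝ) (n : ℕ) (x y₁ y₂ : ℝ) :
    ∑ i ∈ Finset.range (n - 1), FGr26f ε ((n : ℤ) - 2 - i) x y₁ y₂ * x ^ i
      = ∑ l ∈ Finset.Icc 2 n, FGr26f ε ((n : ℤ) - l) x y₁ y₂ * x ^ (l - 2) := by
  rw [← Finset.Ico_add_one_right_eq_Icc, Finset.sum_Ico_eq_sum_range]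
  rw [show n + 1 - 2 = n - 1 by omega]
  refine Finset.sum_congr rfl fun i _ => ?_
  rw [show ((n : ℤ) - (2 + i : ℕ)) = ((n : ℤ) - 2 - i) by push_cast; ring,
    show 2 + i - 2 = i by omega]

lemma split1 (ε : ℝ) (n : ℕ) (x y₁ y₂ : ℝ) :
    ∑ i ∈ Finset.range n, FGr26f ε ((n : ℤ) - 1 - i) x y₁ y₂ * x ^ i
      = FGr26f ε ((n : ℤ) - 1) x y₁ y₂
        + x * ∑ l ∈ Finset.Icc 2 n, FGr26f ε ((n : ℤ) - l) x y₁ y₂ * x ^ (l - 2) := by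
  cases n with
  | zero =>
    rw [Finset.range_zero, Finset.sum_empty, Finset.Icc_eq_empty (by omega),
      Finset.sum_empty, mul_zero, add_zero,
      show ((0:ℕ):ℤ) - 1 = -1 by norm_num, FGr26f_neg (by norm_num)]
  | succ d =>
    rw [Finset.sum_range_succ']
    have h0 : FGr26f ε (((d+1:ℕ) : ℤ) - 1 - ((0:ℕ):ℤ)) x y₁ y₂ * x ^ 0
        = FGr26f ε (((d+1:ℕ):ℤ) - 1) x y₁ y₂ := by norm_num
    rw [h0]
    have h2 : ∑ i ∈ Finset.range d,
          FGr26f ε (((d+1:ℕ):ℤ) - 1 - ((i+1 : ℕ):ℤ)) x y₁ y₂ * x ^ (i+1)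
        = x * ∑ i ∈ Finset.range (d+1-1), FGr26f ε (((d+1:ℕ):ℤ) - 2 - i) x y₁ y₂ * x ^ i := by
      rw [show d+1-1 = d by omega, Finset.mul_sum]
      refine Finset.sum_congr rfl fun i _ => ?_
      rw [show ((d+1:ℕ):ℤ) - 1 - ((i+1 : ℕ):ℤ) = ((d+1:ℕ):ℤ) - 2 - i by push_cast; ring]
      ring
    rw [h2, reindex_Icc, add_comm]

lemma split2 (ε : ℝ) (n : ℕ) (x y₁ y₂ : ℝ) :
    ∑ i ∈ Finset.range (n + 1), FGr26f ε ((n : ℤ) - i) x y₁ y₂ * x ^ i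
      = FGr26f ε (n : ℤ) x y₁ y₂ + x * FGr26f ε ((n : ℤ) - 1) x y₁ y₂
        + x ^ 2 * ∑ l ∈ Finset.Icc 2 n, FGr26f ε ((n : ℤ) - l) x y₁ y₂ * x ^ (l - 2) := by
  rw [Finset.sum_range_succ']
  have h1 : ∑ i ∈ Finset.range n, FGr26f ε ((n : ℤ) - ((i : ℕ) + 1 : ℕ)) x y₁ y₂ * x ^ (i + 1)
      = x * ∑ i ∈ Finset.range n, FGr26f ε ((n : ℤ) - 1 - i) x y₁ y₂ * x ^ i := by
    rw [Finset.mul_sum]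
    refine Finset.sum_congr rfl fun i _ => ?_
    rw [show ((n : ℤ) - ((i : ℕ) + 1 : ℕ)) = ((n : ℤ) - 1 - i) by push_cast; ring]
    ring
  rw [h1, split1, pow_zero, mul_one]
  rw [show ((n:ℤ) - (0:ℕ)) = (n:ℤ) by push_cast; ring]
  ring

lemma sum_to_Icc (ε : ℝ) (n : ℕ) (x y₁ y₂ : ℝ) :
    ∑ i ∈ Finset.range (n + 1), FGr26f ε ((n : ℤ) - 2 - i) x y₁ y₂ * x ^ i
      = ∑ l ∈ Finset.Icc 2 n, FGr26f ε ((n : ℤ) - l) x y₁ y₂ * x ^ (l - 2) := by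
  rw [ext_sum ε ((n:ℤ) - 2) (show n - 1 ≤ n + 1 by omega) (by omega) x y₁ y₂, reindex_Icc]

lemma sum_distrib1 {n : ℕ} (s : Fin n → ℝ) (a : ℝ) (A : Fin n → ℝ) :
    ∑ j : Fin n, s j * (a * A j) = a * ∑ j : Fin n, s j * A j := by
  rw [Finset.mul_sum]
  exact Finset.sum_congr rfl fun j _ => by ring

lemma sum_distrib2 {n : ℕ} (s : Fin n → ℝ) (a b : ℝ) (A B : Fin n → ℝ) :
    ∑ j : Fin n, s j * (a * (A j + b * B j))
      = a * (∑ j : Fin n, s j * A j) + a * b * (∑ j : Fin n, s j * B j) := by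
  rw [Finset.mul_sum, Finset.mul_sum, ← Finset.sum_add_distrib]
  exact Finset.sum_congr rfl fun j _ => by ring

lemma sum_distrib3 {n : ℕ} (s : Fin n → ℝ) (a b c : ℝ) (A B C : Fin n → ℝ) :
    ∑ j : Fin n, s j * (a * (A j + b * B j + c * C j))
      = a * (∑ j : Fin n, s j * A j) + a * b * (∑ j : Fin n, s j * B j)
        + a * c * (∑ j : Fin n, s j * C j) := by
  rw [Finset.mul_sum, Finset.mul_sum, Finset.mul_sum, ← Finset.sum_add_distrib,
    ← Finset.sum_add_distrib]
  exact Finset.sum_congr rfl fun j _ => by ring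


/-- dynamics of the critical point `(u,v₁,v₂)` of
`Φ(t;x,y₁,y₂) = Σ_{k=0}^m t_k F^{k+1}`: the hydrodynamic type system of mixed
type, `∂u/∂t_k = G^k ∂u/∂t₀`, `∂v₁/∂t_k = F^k ∂v₁/∂t₀ + F^{k-1} ∂v₂/∂t₀`,
`∂v₂/∂t_k = F^k ∂v₂/∂t₀`, with `G^k = Σ_{j=0}^k F^{k-j} u^j`; the coefficient
matrix is block diagonal with a 1×1 block `G^k` and a 2×2 upper-triangular
Jordan-type block. -/
theorem confluent_hydrodynamic_Gr26_mixed (ε : ℝ) (hε : ε ≠ 0)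
    (m : ℕ) (hm : 2 ≤ m)
    (Ω : Set (Fin (m + 1) → ℝ)) (hΩ : IsOpen Ω)
    (u v₁ v₂ : (Fin (m + 1) → ℝ) → ℝ)
    (hu : ContDiffOn ℝ (⊤ : ℕ∞) u Ω) (hv₁ : ContDiffOn ℝ (⊤ : ℕ∞) v₁ Ω)
    (hv₂ : ContDiffOn ℝ (⊤ : ℕ∞) v₂ Ω)
    (hcrit₁ : ∀ t ∈ Ω,
      ∑ j : Fin (m + 1), t j * FGr26f ε (j.1 : ℤ) (u t) (v₁ t) (v₂ t) = 0)
    (hcrit₂ : ∀ t ∈ Ω,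
      ∑ j : Fin (m + 1), t j * FGr26f ε ((j.1 : ℤ) - 1) (u t) (v₁ t) (v₂ t) = 0)
    (hcrit₃ : ∀ t ∈ Ω,
      ∑ j : Fin (m + 1), t j * (∑ l ∈ Finset.Icc 2 j.1,
        FGr26f ε ((j.1 : ℤ) - l) (u t) (v₁ t) (v₂ t) * u t ^ (l - 2)) = 0)
    (hune : ∀ t ∈ Ω, u t ≠ 0)
    (hΦ00 : ∀ t ∈ Ω, ∑ k : Fin (m + 1),
      t k * eval ![u t, v₁ t, v₂ t]
        (pderiv (0 : Fin 3) (pderiv (0 : Fin 3) (FGr26 ε ((k.1 : ℤ) + 1)))) ≠ 0)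
    (hΦ12 : ∀ t ∈ Ω, ∑ k : Fin (m + 1),
      t k * eval ![u t, v₁ t, v₂ t]
        (pderiv (1 : Fin 3) (pderiv (2 : Fin 3) (FGr26 ε ((k.1 : ℤ) + 1)))) ≠ 0) :
    ∀ t ∈ Ω, ∀ k : Fin (m + 1), k ≠ 0 →
      (fderiv ℝ u t (Pi.single k 1)
          = (∑ j ∈ Finset.range (k.1 + 1),
                FGr26f ε ((k.1 : ℤ) - j) (u t) (v₁ t) (v₂ t) * u t ^ j) *
              fderiv ℝ u t (Pi.single 0 1))
      ∧ (fderiv ℝ v₁ t (Pi.single k 1)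
          = FGr26f ε (k.1 : ℤ) (u t) (v₁ t) (v₂ t) * fderiv ℝ v₁ t (Pi.single 0 1)
            + FGr26f ε ((k.1 : ℤ) - 1) (u t) (v₁ t) (v₂ t) *
                fderiv ℝ v₂ t (Pi.single 0 1))
      ∧ fderiv ℝ v₂ t (Pi.single k 1)
          = FGr26f ε (k.1 : ℤ) (u t) (v₁ t) (v₂ t) *
              fderiv ℝ v₂ t (Pi.single 0 1) := by
  intro t ht k _
  -- coefficient sums
  -- Equation A : Q j = FGr26 ε j
  have eqA : ∀ kk : Fin (m+1),
      eval ![u t, v₁ t, v₂ t] (FGr26 ε ((kk.1 : ℤ)))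
        + (∑ j : Fin (m+1), t j * eval ![u t, v₁ t, v₂ t]
            (pderiv (0:Fin 3) (FGr26 ε ((j.1:ℤ))))) * fderiv ℝ u t (Pi.single kk 1)
        + (∑ j : Fin (m+1), t j * eval ![u t, v₁ t, v₂ t]
            (pderiv (1:Fin 3) (FGr26 ε ((j.1:ℤ))))) * fderiv ℝ v₁ t (Pi.single kk 1)
        + (∑ j : Fin (m+1), t j * eval ![u t, v₁ t, v₂ t]
            (pderiv (2:Fin 3) (FGr26 ε ((j.1:ℤ))))) * fderiv ℝ v₂ t (Pi.single kk 1) = 0 :=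
    fun kk => key_lin hΩ hu hv₁ hv₂ (fun j => FGr26 ε ((j.1:ℤ)))
      (fun s hs => hcrit₁ s hs) ht kk

  -- Equation B : Q j = FGr26 ε (j-1)
  have eqB : ∀ kk : Fin (m+1),
      eval ![u t, v₁ t, v₂ t] (FGr26 ε ((kk.1 : ℤ) - 1))
        + (∑ j : Fin (m+1), t j * eval ![u t, v₁ t, v₂ t]
            (pderiv (0:Fin 3) (FGr26 ε ((j.1:ℤ) - 1)))) * fderiv ℝ u t (Pi.single kk 1)
        + (∑ j : Fin (m+1), t j * eval ![u t, v₁ t, v₂ t]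
            (pderiv (1:Fin 3) (FGr26 ε ((j.1:ℤ) - 1)))) * fderiv ℝ v₁ t (Pi.single kk 1)
        + (∑ j : Fin (m+1), t j * eval ![u t, v₁ t, v₂ t]
            (pderiv (2:Fin 3) (FGr26 ε ((j.1:ℤ) - 1)))) * fderiv ℝ v₂ t (Pi.single kk 1)
        = 0 :=
    fun kk => key_lin hΩ hu hv₁ hv₂ (fun j => FGr26 ε ((j.1:ℤ) - 1))
      (fun s hs => hcrit₂ s hs) ht kk
  -- Equation D : Q j = pderiv 0 (FGr26 ε (j+1))
  have hQD : ∀ s ∈ Ω, ∑ j : Fin (m+1), s j * eval ![u s, v₁ s, v₂ s]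
      (pderiv (0:Fin 3) (FGr26 ε ((j.1:ℤ) + 1))) = 0 := by
    intro s hs
    have he : ∀ j : Fin (m+1), eval ![u s, v₁ s, v₂ s]
        (pderiv (0:Fin 3) (FGr26 ε ((j.1:ℤ) + 1)))
        = ε * (FGr26f ε (j.1:ℤ) (u s) (v₁ s) (v₂ s)
            + u s * FGr26f ε ((j.1:ℤ) - 1) (u s) (v₁ s) (v₂ s)
            + u s ^ 2 * (∑ l ∈ Finset.Icc 2 j.1,
                FGr26f ε ((j.1:ℤ) - l) (u s) (v₁ s) (v₂ s) * u s ^ (l - 2))) := by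
      intro j
      rw [show ((j.1:ℤ) + 1) = ((j.1 + 1 : ℕ) : ℤ) by push_cast; ring, eval_pd0]
      congr 1
      have hcast : ∀ i ∈ Finset.range (j.1 + 1),
          FGr26f ε (((j.1 + 1 : ℕ) : ℤ) - 1 - i) (u s) (v₁ s) (v₂ s) * u s ^ i
            = FGr26f ε ((j.1 : ℤ) - i) (u s) (v₁ s) (v₂ s) * u s ^ i := by
        intro i _
        rw [show (((j.1 + 1 : ℕ) : ℤ) - 1 - i) = ((j.1 : ℤ) - i) by push_cast; ring]
      rw [Finset.sum_congr rfl hcast, split2]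
    rw [Finset.sum_congr rfl fun j _ => by rw [he j], sum_distrib3,
      hcrit₁ s hs, hcrit₂ s hs, hcrit₃ s hs]
    ring
  have eqD : ∀ kk : Fin (m+1),
      eval ![u t, v₁ t, v₂ t] (pderiv (0:Fin 3) (FGr26 ε ((kk.1 : ℤ) + 1)))
        + (∑ j : Fin (m+1), t j * eval ![u t, v₁ t, v₂ t]
            (pderiv (0:Fin 3) (pderiv (0:Fin 3) (FGr26 ε ((j.1:ℤ) + 1)))))
              * fderiv ℝ u t (Pi.single kk 1)
        + (∑ j : Fin (m+1), t j * eval ![u t, v₁ t, v₂ t]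
            (pderiv (1:Fin 3) (pderiv (0:Fin 3) (FGr26 ε ((j.1:ℤ) + 1)))))
              * fderiv ℝ v₁ t (Pi.single kk 1)
        + (∑ j : Fin (m+1), t j * eval ![u t, v₁ t, v₂ t]
            (pderiv (2:Fin 3) (pderiv (0:Fin 3) (FGr26 ε ((j.1:ℤ) + 1)))))
              * fderiv ℝ v₂ t (Pi.single kk 1) = 0 :=
    fun kk => key_lin hΩ hu hv₁ hv₂ (fun j => pderiv (0:Fin 3) (FGr26 ε ((j.1:ℤ) + 1)))
      hQD ht kk
  ----------------------------------------------------------------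
  -- Coefficient computations
  have hc1A : (∑ j : Fin (m+1), t j * eval ![u t, v₁ t, v₂ t]
      (pderiv (1:Fin 3) (FGr26 ε ((j.1:ℤ))))) = 0 := by
    rw [Finset.sum_congr rfl fun j _ => by rw [eval_pd1]]
    exact hcrit₂ t ht
  have hc0A : (∑ j : Fin (m+1), t j * eval ![u t, v₁ t, v₂ t]
      (pderiv (0:Fin 3) (FGr26 ε ((j.1:ℤ))))) = 0 := by
    have he : ∀ j : Fin (m+1), eval ![u t, v₁ t, v₂ t]
        (pderiv (0:Fin 3) (FGr26 ε ((j.1:ℤ))))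
        = ε * (FGr26f ε ((j.1:ℤ) - 1) (u t) (v₁ t) (v₂ t)
            + u t * (∑ l ∈ Finset.Icc 2 j.1,
                FGr26f ε ((j.1:ℤ) - l) (u t) (v₁ t) (v₂ t) * u t ^ (l - 2))) := by
      intro j
      rw [eval_pd0, split1]
    rw [Finset.sum_congr rfl fun j _ => by rw [he j], sum_distrib2,
      hcrit₂ t ht, hcrit₃ t ht]
    ring
  have hc2A : (∑ j : Fin (m+1), t j * eval ![u t, v₁ t, v₂ t]
      (pderiv (2:Fin 3) (FGr26 ε ((j.1:ℤ)))))
      = ∑ j : Fin (m+1), t j * FGr26f ε ((j.1:ℤ) - 2) (u t) (v₁ t) (v₂ t) :=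
    Finset.sum_congr rfl fun j _ => by rw [eval_pd2]
  have hc0B : (∑ j : Fin (m+1), t j * eval ![u t, v₁ t, v₂ t]
      (pderiv (0:Fin 3) (FGr26 ε ((j.1:ℤ) - 1)))) = 0 := by
    have he : ∀ j : Fin (m+1), eval ![u t, v₁ t, v₂ t]
        (pderiv (0:Fin 3) (FGr26 ε ((j.1:ℤ) - 1)))
        = ε * (∑ l ∈ Finset.Icc 2 j.1,
            FGr26f ε ((j.1:ℤ) - l) (u t) (v₁ t) (v₂ t) * u t ^ (l - 2)) := by
      intro j
      rcases Nat.eq_zero_or_pos j.1 with h0 | hpos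
      · rw [h0]
        rw [show (((0:ℕ):ℤ) - 1) = -1 by norm_num, FGr26_neg (by norm_num), map_zero,
          map_zero, Finset.Icc_eq_empty (by omega), Finset.sum_empty, mul_zero]
      · obtain ⟨d, hd⟩ : ∃ d, j.1 = d + 1 := ⟨j.1 - 1, by omega⟩
        rw [hd, show (((d+1:ℕ)):ℤ) - 1 = ((d:ℕ):ℤ) by push_cast; ring, eval_pd0]
        congr 1
        rw [← reindex_Icc ε (d+1) (u t) (v₁ t) (v₂ t), show d + 1 - 1 = d by omega]
        refine Finset.sum_congr rfl fun i _ => ?_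
        rw [show (((d+1:ℕ)):ℤ) - 2 - i = ((d:ℕ):ℤ) - 1 - i by push_cast; ring]
    rw [Finset.sum_congr rfl fun j _ => by rw [he j], sum_distrib1, hcrit₃ t ht, mul_zero]
  have hc1B : (∑ j : Fin (m+1), t j * eval ![u t, v₁ t, v₂ t]
      (pderiv (1:Fin 3) (FGr26 ε ((j.1:ℤ) - 1))))
      = ∑ j : Fin (m+1), t j * FGr26f ε ((j.1:ℤ) - 2) (u t) (v₁ t) (v₂ t) :=
    Finset.sum_congr rfl fun j _ => by
      rw [eval_pd1, show ((j.1:ℤ) - 1 - 1) = ((j.1:ℤ) - 2) by ring]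
  have hc2B : (∑ j : Fin (m+1), t j * eval ![u t, v₁ t, v₂ t]
      (pderiv (2:Fin 3) (FGr26 ε ((j.1:ℤ) - 1))))
      = ∑ j : Fin (m+1), t j * FGr26f ε ((j.1:ℤ) - 3) (u t) (v₁ t) (v₂ t) :=
    Finset.sum_congr rfl fun j _ => by
      rw [eval_pd2, show ((j.1:ℤ) - 1 - 2) = ((j.1:ℤ) - 3) by ring]
  have hc1D : (∑ j : Fin (m+1), t j * eval ![u t, v₁ t, v₂ t]
      (pderiv (1:Fin 3) (pderiv (0:Fin 3) (FGr26 ε ((j.1:ℤ) + 1))))) = 0 := by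
    have he : ∀ j : Fin (m+1), eval ![u t, v₁ t, v₂ t]
        (pderiv (1:Fin 3) (pderiv (0:Fin 3) (FGr26 ε ((j.1:ℤ) + 1))))
        = ε * (FGr26f ε ((j.1:ℤ) - 1) (u t) (v₁ t) (v₂ t)
            + u t * (∑ l ∈ Finset.Icc 2 j.1,
                FGr26f ε ((j.1:ℤ) - l) (u t) (v₁ t) (v₂ t) * u t ^ (l - 2))) := by
      intro j
      rw [show ((j.1:ℤ) + 1) = ((j.1 + 1 : ℕ) : ℤ) by push_cast; ring, eval_pd1_pd0]
      congr 1
      have hcast : ∀ i ∈ Finset.range (j.1 + 1),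
          FGr26f ε (((j.1 + 1 : ℕ) : ℤ) - 2 - i) (u t) (v₁ t) (v₂ t) * u t ^ i
            = FGr26f ε ((j.1 : ℤ) - 1 - i) (u t) (v₁ t) (v₂ t) * u t ^ i := by
        intro i _
        rw [show (((j.1 + 1 : ℕ) : ℤ) - 2 - i) = ((j.1 : ℤ) - 1 - i) by push_cast; ring]
      rw [Finset.sum_congr rfl hcast,
        ext_sum ε ((j.1:ℤ) - 1) (Nat.le_succ j.1) (by omega) (u t) (v₁ t) (v₂ t), split1]
    rw [Finset.sum_congr rfl fun j _ => by rw [he j], sum_distrib2,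
      hcrit₂ t ht, hcrit₃ t ht]
    ring
  have hc2D : (∑ j : Fin (m+1), t j * eval ![u t, v₁ t, v₂ t]
      (pderiv (2:Fin 3) (pderiv (0:Fin 3) (FGr26 ε ((j.1:ℤ) + 1))))) = 0 := by
    have he : ∀ j : Fin (m+1), eval ![u t, v₁ t, v₂ t]
        (pderiv (2:Fin 3) (pderiv (0:Fin 3) (FGr26 ε ((j.1:ℤ) + 1))))
        = ε * (∑ l ∈ Finset.Icc 2 j.1,
            FGr26f ε ((j.1:ℤ) - l) (u t) (v₁ t) (v₂ t) * u t ^ (l - 2)) := by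
      intro j
      rw [show ((j.1:ℤ) + 1) = ((j.1 + 1 : ℕ) : ℤ) by push_cast; ring, eval_pd2_pd0]
      congr 1
      have hcast : ∀ i ∈ Finset.range (j.1 + 1),
          FGr26f ε (((j.1 + 1 : ℕ) : ℤ) - 3 - i) (u t) (v₁ t) (v₂ t) * u t ^ i
            = FGr26f ε ((j.1 : ℤ) - 2 - i) (u t) (v₁ t) (v₂ t) * u t ^ i := by
        intro i _
        rw [show (((j.1 + 1 : ℕ) : ℤ) - 3 - i) = ((j.1 : ℤ) - 2 - i) by push_cast; ring]
      rw [Finset.sum_congr rfl hcast, sum_to_Icc]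
    rw [Finset.sum_congr rfl fun j _ => by rw [he j], sum_distrib1, hcrit₃ t ht, mul_zero]
  ----------------------------------------------------------------
  -- nondegeneracy
  have hP00 : (∑ j : Fin (m+1), t j * eval ![u t, v₁ t, v₂ t]
      (pderiv (0:Fin 3) (pderiv (0:Fin 3) (FGr26 ε ((j.1:ℤ) + 1))))) ≠ 0 := hΦ00 t ht
  have hP12 : (∑ j : Fin (m+1), t j * FGr26f ε ((j.1:ℤ) - 2) (u t) (v₁ t) (v₂ t)) ≠ 0 := by
    have h := hΦ12 t ht
    have he : ∀ j : Fin (m+1), eval ![u t, v₁ t, v₂ t]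
        (pderiv (1:Fin 3) (pderiv (2:Fin 3) (FGr26 ε ((j.1:ℤ) + 1))))
        = FGr26f ε ((j.1:ℤ) - 2) (u t) (v₁ t) (v₂ t) := by
      intro j
      rw [pd2_F, show ((j.1:ℤ) + 1 - 2) = ((j.1:ℤ) - 1) by ring, eval_pd1,
        show ((j.1:ℤ) - 1 - 1) = ((j.1:ℤ) - 2) by ring]
    rwa [Finset.sum_congr rfl fun j _ => by rw [he j]] at h
  ----------------------------------------------------------------
  -- evaluated leading terms
  have hEA : ∀ kk : Fin (m+1), eval ![u t, v₁ t, v₂ t] (FGr26 ε ((kk.1:ℤ)))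
      = FGr26f ε ((kk.1:ℤ)) (u t) (v₁ t) (v₂ t) := fun kk => rfl
  have hEB : ∀ kk : Fin (m+1), eval ![u t, v₁ t, v₂ t] (FGr26 ε ((kk.1:ℤ) - 1))
      = FGr26f ε ((kk.1:ℤ) - 1) (u t) (v₁ t) (v₂ t) := fun kk => rfl
  have hED : eval ![u t, v₁ t, v₂ t] (pderiv (0:Fin 3) (FGr26 ε ((k.1:ℤ) + 1)))
      = ε * ∑ j ∈ Finset.range (k.1 + 1),
          FGr26f ε ((k.1:ℤ) - j) (u t) (v₁ t) (v₂ t) * u t ^ j := by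
    rw [show ((k.1:ℤ) + 1) = ((k.1 + 1 : ℕ) : ℤ) by push_cast; ring, eval_pd0]
    congr 1
    refine Finset.sum_congr rfl fun i _ => ?_
    rw [show (((k.1 + 1 : ℕ) : ℤ) - 1 - i) = ((k.1:ℤ) - i) by push_cast; ring]
  -- values at index 0
  have hval0 : ((0 : Fin (m+1)).1 : ℤ) = 0 := by simp
  have hF0 : FGr26f ε (((0 : Fin (m+1)).1:ℤ)) (u t) (v₁ t) (v₂ t) = 1 := by
    rw [hval0, FGr26f_zero]
  have hFm1 : FGr26f ε (((0 : Fin (m+1)).1:ℤ) - 1) (u t) (v₁ t) (v₂ t) = 0 := by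
    rw [hval0]
    exact FGr26f_neg (by norm_num) _ _ _
  have hED0 : eval ![u t, v₁ t, v₂ t]
      (pderiv (0:Fin 3) (FGr26 ε (((0 : Fin (m+1)).1:ℤ) + 1))) = ε := by
    rw [hval0, show ((0:ℤ) + 1) = ((1:ℕ):ℤ) by norm_num, eval_pd0, Finset.sum_range_one,
      show (((1:ℕ):ℤ) - 1 - ((0:ℕ):ℤ)) = 0 by norm_num, FGr26f_zero, pow_zero, mul_one,
      mul_one]
  ----------------------------------------------------------------
  -- reduced equations
  have rA : ∀ kk : Fin (m+1),
      FGr26f ε ((kk.1:ℤ)) (u t) (v₁ t) (v₂ t)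
        + (∑ j : Fin (m+1), t j * FGr26f ε ((j.1:ℤ) - 2) (u t) (v₁ t) (v₂ t))
            * fderiv ℝ v₂ t (Pi.single kk 1) = 0 := by
    intro kk
    have h := eqA kk
    rw [hc0A, hc1A, hc2A, hEA kk, zero_mul, zero_mul, add_zero, add_zero] at h
    exact h
  have rB : ∀ kk : Fin (m+1),
      FGr26f ε ((kk.1:ℤ) - 1) (u t) (v₁ t) (v₂ t)
        + (∑ j : Fin (m+1), t j * FGr26f ε ((j.1:ℤ) - 2) (u t) (v₁ t) (v₂ t))
            * fderiv ℝ v₁ t (Pi.single kk 1)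
        + (∑ j : Fin (m+1), t j * FGr26f ε ((j.1:ℤ) - 3) (u t) (v₁ t) (v₂ t))
            * fderiv ℝ v₂ t (Pi.single kk 1) = 0 := by
    intro kk
    have h := eqB kk
    rw [hc0B, hc1B, hc2B, hEB kk, zero_mul, add_zero] at h
    exact h
  have rD : ∀ kk : Fin (m+1),
      eval ![u t, v₁ t, v₂ t] (pderiv (0:Fin 3) (FGr26 ε ((kk.1:ℤ) + 1)))
        + (∑ j : Fin (m+1), t j * eval ![u t, v₁ t, v₂ t]
            (pderiv (0:Fin 3) (pderiv (0:Fin 3) (FGr26 ε ((j.1:ℤ) + 1)))))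
            * fderiv ℝ u t (Pi.single kk 1) = 0 := by
    intro kk
    have h := eqD kk
    rw [hc1D, hc2D, zero_mul, zero_mul, add_zero, add_zero] at h
    exact h
  ----------------------------------------------------------------
  -- solve
  have hv2 : fderiv ℝ v₂ t (Pi.single k 1)
      = FGr26f ε (k.1:ℤ) (u t) (v₁ t) (v₂ t) * fderiv ℝ v₂ t (Pi.single 0 1) := by
    have h1 := rA k
    have h2 := rA 0
    rw [hF0] at h2
    apply mul_left_cancel₀ hP12
    linear_combination h1 - FGr26f ε (k.1:ℤ) (u t) (v₁ t) (v₂ t) * h2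
  have hu' : fderiv ℝ u t (Pi.single k 1)
      = (∑ j ∈ Finset.range (k.1 + 1),
          FGr26f ε ((k.1:ℤ) - j) (u t) (v₁ t) (v₂ t) * u t ^ j) * fderiv ℝ u t (Pi.single 0 1) := by
    have h1 := rD k
    have h2 := rD 0
    rw [hED] at h1
    rw [hED0] at h2
    apply mul_left_cancel₀ hP00
    have hεne := hε
    linear_combination h1
      - (∑ j ∈ Finset.range (k.1 + 1),
          FGr26f ε ((k.1:ℤ) - j) (u t) (v₁ t) (v₂ t) * u t ^ j) * h2
  have hv1 : fderiv ℝ v₁ t (Pi.single k 1)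
      = FGr26f ε (k.1:ℤ) (u t) (v₁ t) (v₂ t) * fderiv ℝ v₁ t (Pi.single 0 1)
        + FGr26f ε ((k.1:ℤ) - 1) (u t) (v₁ t) (v₂ t) * fderiv ℝ v₂ t (Pi.single 0 1) := by
    have h1 := rB k
    have h2 := rB 0
    rw [hFm1] at h2
    have h3 := rA 0
    rw [hF0] at h3
    apply mul_left_cancel₀ hP12
    linear_combination h1
      - FGr26f ε (k.1:ℤ) (u t) (v₁ t) (v₂ t) * h2
      - FGr26f ε ((k.1:ℤ) - 1) (u t) (v₁ t) (v₂ t) * h3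
      - (∑ j : Fin (m+1), t j * FGr26f ε ((j.1:ℤ) - 3) (u t) (v₁ t) (v₂ t)) * hv2
  exact ⟨hu', hv1, hv2⟩
end
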